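/- arXiv:2509.05541 — 8 statements merged into one kernel-verified Lean document; each statement's English description precedes it below -/
import Mathlib

section
/- Let X and Y be metric spaces with X nonempty, let F : X → Y be continuous, and let D : Y × Y → ℝ be nonnegative and jointly lower semicontinuous on Y × Y. Let (ν_N) be a sequence in Y converging to ν ∈ Y, and define E_N(x) = D(F(x), ν_N) and E(x) = D(F(x), ν). Assume: (equi-coercivity) for every λ ∈ ℝ there exists a compact set K_λ ⊆ X such that {x ∈ X : E_N(x) ≤ λ} ⊆ K_λ for every N; and (pointwise convergence) E_N(x) → E(x) as N → ∞ for every x ∈ X. Then inf_{x ∈ X} E_N(x) → inf_{x ∈ X} E(x) as N → ∞. -/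
open Filter Topology

/-- Convergence of infima under equi-coercivity and pointwise convergence
of the objectives `E_N(x) = D(F(x), ν_N)` to `E(x) = D(F(x), ν)`. -/
theorem stmt_0 {X Y : Type*} [MetricSpace X] [MetricSpace Y] [Nonempty X]
    (F : X → Y) (hF : Continuous F)
    (D : Y × Y → ℝ) (hD0 : ∀ p, 0 ≤ D p) (hDlsc : LowerSemicontinuous D)
    (ν : ℕ → Y) (ν' : Y) (hν : Tendsto ν atTop (𝓝 ν'))
    (hcoer : ∀ lam : ℝ, ∃ K : Set X, IsCompact K ∧
      ∀ N : ℕ, {x : X | D (F x, ν N) ≤ lam} ⊆ K)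
    (hpt : ∀ x : X, Tendsto (fun N => D (F x, ν N)) atTop (𝓝 (D (F x, ν')))) :
    Tendsto (fun N => ⨅ x : X, D (F x, ν N)) atTop (𝓝 (⨅ x : X, D (F x, ν'))) := by
  have hbddN : ∀ N, BddBelow (Set.range fun x => D (F x, ν N)) :=
    fun N => ⟨0, by rintro _ ⟨x, rfl⟩; exact hD0 _⟩
  have hbdd' : BddBelow (Set.range fun x => D (F x, ν')) :=
    ⟨0, by rintro _ ⟨x, rfl⟩; exact hD0 _⟩
  set m := ⨅ x : X, D (F x, ν') with hm
  rw [Metric.tendsto_atTop]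
  intro ε hε
  obtain ⟨x₀, hx₀⟩ : ∃ x, D (F x, ν') < m + ε / 2 :=
    exists_lt_of_ciInf_lt (by linarith)
  have hupper : ∀ᶠ N in atTop, (⨅ x : X, D (F x, ν N)) < m + ε := by
    have h1 : ∀ᶠ N in atTop, D (F x₀, ν N) < m + ε :=
      (hpt x₀) (Iio_mem_nhds (by linarith))
    exact h1.mono fun N hN => lt_of_le_of_lt (ciInf_le (hbddN N) x₀) hN
  have hlower : ∀ᶠ N in atTop, m - ε < ⨅ x : X, D (F x, ν N) := by
    by_contra hcon
    rw [Filter.not_eventually] at hcon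
    have hfreq : ∃ᶠ N in atTop, (⨅ x : X, D (F x, ν N)) ≤ m - ε :=
      hcon.mono fun N h => not_lt.1 h
    obtain ⟨φ, hφ, hφ'⟩ := Filter.extraction_of_frequently_atTop hfreq
    have hch : ∀ k, ∃ x, D (F x, ν (φ k)) < m - ε / 2 := fun k =>
      exists_lt_of_ciInf_lt (lt_of_le_of_lt (hφ' k) (by linarith))
    choose u hu using hch
    obtain ⟨K, hK, hKsub⟩ := hcoer m
    have huK : ∀ k, u k ∈ K := fun k =>
      hKsub (φ k) (show D (F (u k), ν (φ k)) ≤ m from (hu k).le.trans (by linarith))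
    obtain ⟨x', hx'K, ψ, hψ, hψlim⟩ := hK.tendsto_subseq huK
    have hF' : Tendsto (fun j => F (u (ψ j))) atTop (𝓝 (F x')) :=
      (hF.tendsto x').comp hψlim
    have hν2 : Tendsto (fun j => ν (φ (ψ j))) atTop (𝓝 ν') :=
      hν.comp ((hφ.comp hψ).tendsto_atTop)
    have hprod : Tendsto (fun j => (F (u (ψ j)), ν (φ (ψ j)))) atTop (𝓝 (F x', ν')) :=
      hF'.prodMk_nhds hν2
    have hm' : m - ε / 2 < D (F x', ν') :=
      lt_of_lt_of_le (by linarith) (ciInf_le hbdd' x')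
    have hev := hprod.eventually (hDlsc (F x', ν') (m - ε / 2) hm')
    obtain ⟨j, hj⟩ := hev.exists
    exact absurd (hu (ψ j)) (not_lt.2 hj.le)
  obtain ⟨N₀, hN₀⟩ := Filter.eventually_atTop.1 (hupper.and hlower)
  refine ⟨N₀, fun n hn => ?_⟩
  obtain ⟨h1, h2⟩ := hN₀ n hn
  rw [Real.dist_eq, abs_sub_lt_iff]
  constructor <;> linarith
end

section
/- Let Θ be a nonempty Polish space and let E : P(Θ) → ℝ be continuous with respect to the topology of weak convergence and bounded below. Suppose that for every K ∈ ℕ the infimum of E over P_em^K(Θ) is attained, and denote A_K = min_{ρ ∈ P_em^K(Θ)} E(ρ). Then A_K → inf_{ρ ∈ P_em(Θ)} E(ρ) as K → ∞. -/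
/-!
Every empirical measure `ρ = (1/p) ∑ δ_{θ_k}` is the weak limit of `K`-particle empirical
measures: repeat `θ_0, …, θ_{p-1}` cyclically `K` times. Integrating a bounded continuous `f`
gives the Cesàro mean of a `p`-periodic sequence, which tends to its mean over one period.
Hence `A_K ≤ E(ν_K) → E(ρ)`, so `limsup A_K ≤ inf_{Pem} E`, while `A_K ≥ inf_{Pem} E` trivially.
-/

open Filter Topology MeasureTheory

/-- The set of uniform empirical probability measures on `K` (not necessarily distinct)
points of `Θ`, i.e. measures of the form `(1/K) ∑_{k=1}^K δ_{θ_k}`. -/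
def PemK {Θ : Type*} [MeasurableSpace Θ] (K : ℕ) : Set (ProbabilityMeasure Θ) :=
  {ρ | ∃ θs : Fin K → Θ,
    (ρ : Measure Θ) = (K : ENNReal)⁻¹ • ∑ k : Fin K, Measure.dirac (θs k)}

/-- The set of all uniform empirical probability measures on `Θ`. -/
def Pem (Θ : Type*) [MeasurableSpace Θ] : Set (ProbabilityMeasure Θ) :=
  ⋃ K ∈ {K : ℕ | 1 ≤ K}, PemK K

open Finset
open scoped ENNReal

namespace Function.Periodic

variable {M : Type*} [AddCancelCommMonoid M] {g : ℕ → M} {p : ℕ}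

lemma sum_range_shift (hg : Periodic g p) (n : ℕ) :
    ∑ i ∈ range p, g (n + i) = ∑ i ∈ range p, g i := by
  induction n with
  | zero => simp
  | succ n ih =>
    have h := (sum_range_succ' (fun i => g (n + i)) p).symm.trans
      (sum_range_succ (fun i => g (n + i)) p)
    rw [add_zero, ← hg n, ih] at h
    simpa only [add_assoc, add_comm 1] using add_right_cancel h

end Function.Periodic

lemma Function.Periodic.tendsto_cesaro {g : ℕ → ℝ} {p : ℕ} (hg : Function.Periodic g p)
    (hp : p ≠ 0) :
    Tendsto (fun n : ℕ => (∑ i ∈ range n, g i) / n) atTop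
      (𝓝 ((∑ i ∈ range p, g i) / p)) := by
  set mean := (∑ i ∈ range p, g i) / p
  -- The discrepancy from the linear growth `n * mean` is periodic, hence bounded.
  set δ : ℕ → ℝ := fun n => ∑ i ∈ range n, g i - n * mean
  have hδ : Function.Periodic δ p := fun n => by
    simp only [δ, mean, sum_range_add, hg.sum_range_shift, Nat.cast_add]
    field_simp
    ring
  have hδ_bdd : IsBoundedUnder (· ≤ ·) atTop (fun n => ‖δ n‖) := by
    refine isBoundedUnder_of ⟨∑ i ∈ range p, ‖δ i‖, fun n => ?_⟩
    rw [← hδ.map_mod_nat n]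
    exact single_le_sum (fun i _ => norm_nonneg (δ i)) (mem_range.2 (Nat.mod_lt n (by omega)))
  have hδ_lim : Tendsto (fun n : ℕ => (n : ℝ)⁻¹ * δ n) atTop (𝓝 0) :=
    tendsto_inv_atTop_nhds_zero_nat.zero_mul_isBoundedUnder_le hδ_bdd
  have hlim := hδ_lim.const_add mean
  rw [add_zero] at hlim
  refine hlim.congr' ?_
  filter_upwards [eventually_ne_atTop 0] with n hn
  field_simp
  ring

section Empirical

variable {Θ : Type*} [MeasurableSpace Θ] {K : ℕ}

lemma isProbabilityMeasure_empirical [NeZero K] (θs : Fin K → Θ) :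
    IsProbabilityMeasure ((K : ℝ≥0∞)⁻¹ • ∑ k : Fin K, Measure.dirac (θs k)) := by
  constructor
  simp [ENNReal.inv_mul_cancel (NeZero.ne (K : ℝ≥0∞)) (ENNReal.natCast_ne_top K)]

noncomputable def empiricalMeasure [NeZero K] (θs : Fin K → Θ) : ProbabilityMeasure Θ :=
  ⟨_, isProbabilityMeasure_empirical θs⟩

@[simp]
lemma coe_empiricalMeasure [NeZero K] (θs : Fin K → Θ) :
    (empiricalMeasure θs : Measure Θ) = (K : ℝ≥0∞)⁻¹ • ∑ k, Measure.dirac (θs k) :=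
  rfl

lemma empiricalMeasure_mem_PemK [NeZero K] (θs : Fin K → Θ) : empiricalMeasure θs ∈ PemK K :=
  ⟨θs, rfl⟩

lemma integral_empiricalMeasure [NeZero K] (θs : Fin K → Θ) {f : Θ → ℝ} (hf : Measurable f) :
    ∫ x, f x ∂(empiricalMeasure θs : Measure Θ) = (∑ k, f (θs k)) / K := by
  have hf' := hf.stronglyMeasurable
  rw [coe_empiricalMeasure, integral_smul_measure,
    integral_finsetSum_measure fun k _ => integrable_dirac' hf' enorm_lt_top]
  simp [integral_dirac' _ _ hf', div_eq_inv_mul]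

lemma tendsto_empiricalMeasure_cyclic [TopologicalSpace Θ] [OpensMeasurableSpace Θ] {p : ℕ}
    [NeZero p] (θs : Fin p → Θ) :
    Tendsto (fun n : ℕ => empiricalMeasure fun i : Fin (n + 1) => θs (Fin.ofNat p i)) atTop
      (𝓝 (empiricalMeasure θs)) := by
  rw [ProbabilityMeasure.tendsto_iff_forall_integral_tendsto]
  intro f
  set g : ℕ → ℝ := fun i => f (θs (Fin.ofNat p i))
  have hg : Function.Periodic g p := fun i => by simp [g, Fin.ofNat, Nat.add_mod_right]
  have hlim := (hg.tendsto_cesaro (NeZero.ne p)).comp (tendsto_add_atTop_nat 1)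
  simp only [Function.comp_def, ← Fin.sum_univ_eq_sum_range, Nat.cast_add, Nat.cast_one] at hlim
  simpa only [integral_empiricalMeasure _ f.continuous.measurable, Nat.cast_add_one, g,
    Fin.ofNat_val_eq_self] using hlim

lemma exists_tendsto_of_mem_Pem [TopologicalSpace Θ] [OpensMeasurableSpace Θ]
    {ρ : ProbabilityMeasure Θ} (hρ : ρ ∈ Pem Θ) :
    ∃ ν : ℕ → ProbabilityMeasure Θ, (∀ n, ν n ∈ PemK (n + 1)) ∧ Tendsto ν atTop (𝓝 ρ) := by
  obtain ⟨p, hp, θs, hθs⟩ := Set.mem_iUnion₂.1 hρ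
  have : NeZero p := ⟨Nat.one_le_iff_ne_zero.1 hp⟩
  have hρ_eq : ρ = empiricalMeasure θs := Subtype.ext hθs
  exact ⟨_, fun n => empiricalMeasure_mem_PemK _, hρ_eq ▸ tendsto_empiricalMeasure_cyclic θs⟩

end Empirical

theorem stmt_4_general {Θ : Type*} [TopologicalSpace Θ]
    [MeasurableSpace Θ] [BorelSpace Θ]
    (E : ProbabilityMeasure Θ → ℝ) (hE : Continuous E)
    (hbdd : BddBelow (Set.range E))
    (ρK : ℕ → ProbabilityMeasure Θ)
    (hρK : ∀ K : ℕ, 1 ≤ K → ρK K ∈ PemK K ∧ ∀ ν ∈ PemK (Θ := Θ) K, E (ρK K) ≤ E ν) :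
    Tendsto (fun K => E (ρK K)) atTop (𝓝 (⨅ ρ : Pem Θ, E ρ)) := by
  rw [← tendsto_add_atTop_iff_nat 1]
  have hmin (n : ℕ) := hρK (n + 1) (Nat.le_add_left 1 n)
  have hmem (n : ℕ) : ρK (n + 1) ∈ Pem Θ := Set.mem_biUnion (Nat.le_add_left 1 n) (hmin n).1
  have hbdd' : BddBelow (Set.range fun ρ : Pem Θ => E ρ) :=
    hbdd.mono (Set.range_comp_subset_range _ E)
  refine tendsto_order.2 ⟨fun c hc => Eventually.of_forall fun n => ?_, fun c hc => ?_⟩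
  · exact hc.trans_le (ciInf_le hbdd' ⟨_, hmem n⟩)
  · have : Nonempty (Pem Θ) := ⟨⟨_, hmem 0⟩⟩
    obtain ⟨⟨ρ, hρ⟩, hρc⟩ := exists_lt_of_ciInf_lt hc
    obtain ⟨ν, hνK, hνρ⟩ := exists_tendsto_of_mem_Pem hρ
    filter_upwards [((hE.tendsto ρ).comp hνρ).eventually_lt_const hρc] with n hn
    exact ((hmin n).2 _ (hνK n)).trans_lt hn

/-- If `E` is continuous (weak topology) and bounded below, and for each
`K ≥ 1` the infimum `A_K` of `E` over the `K`-particle empirical measures is attained at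
`ρ^K`, then `A_K = E(ρ^K)` converges to the infimum of `E` over all empirical measures. -/
theorem stmt_4 {Θ : Type*} [TopologicalSpace Θ] [PolishSpace Θ]
    [MeasurableSpace Θ] [BorelSpace Θ] [Nonempty Θ]
    (E : ProbabilityMeasure Θ → ℝ) (hE : Continuous E)
    (hbdd : BddBelow (Set.range E))
    (ρK : ℕ → ProbabilityMeasure Θ)
    (hρK : ∀ K : ℕ, 1 ≤ K → ρK K ∈ PemK K ∧ ∀ ν ∈ PemK (Θ := Θ) K, E (ρK K) ≤ E ν) :
    Tendsto (fun K => E (ρK K)) atTop (𝓝 (⨅ ρ : Pem Θ, E ρ)) :=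
  stmt_4_general E hE hbdd ρK hρK
end

section
/- Let Θ be a nonempty Polish space and let E : P(Θ) → ℝ be continuous with respect to the topology of weak convergence, with a unique global minimizer ρ* over P(Θ). Suppose that for every K ∈ ℕ there exists ρ^K ∈ P_em^K(Θ) minimizing E over P_em^K(Θ). Let d : P(Θ) × P(Θ) → ℝ be any nonnegative function satisfying the Łojasiewicz-type inequality d(ν, ρ*) ≤ C·|E(ν) − E(ρ*)|^α for all ν ∈ P(Θ), for some constants C > 0 and α > 0. Then d(ρ^K, ρ*) → 0 as K → ∞. -/
/-
Empirical measures approximate every probability measure `ρ` uniformly in the number of atoms.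
Cut `Θ` into countably many measurable cells of small diameter, keep finitely many cells
`A₀, …, A_{N-1}` that carry all but `ε` of the mass of `ρ`, and place `⌊K ρ(Aₙ)⌋` of `K` atoms at a
point of `Aₙ` (the remaining atoms anywhere). Every cell then loses at most `1/K` of its mass, so
the Lévy–Prokhorov distance to `ρ` is at most `2ε` once `N/K < ε`; the Lévy–Prokhorov topology is
finer than the weak one. Hence each weak neighbourhood of `ρ*` meets `P_em^K` for all large `K`,
which forces `E(ρ^K) → E(ρ*)`, and the Łojasiewicz inequality squeezes `d(ρ^K, ρ*)` to `0`.
-/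

open Filter Topology MeasureTheory

open TopologicalSpace Metric ENNReal NNReal

theorem Multiset.exists_fin_sum_eq_sum_map {α M : Type*} [AddCommMonoid M] (g : α → M)
    (m : Multiset α) : ∃ θs : Fin (Multiset.card m) → α, ∑ i, g (θs i) = (m.map g).sum := by
  induction m using Multiset.induction_on with
  | empty => exact ⟨Fin.elim0, rfl⟩
  | cons a m ih =>
    obtain ⟨θs, hθs⟩ := ih
    rw [Multiset.card_cons]
    exact ⟨Fin.cons a θs, by simp [Fin.sum_univ_succ, hθs]⟩

theorem NNReal.coe_le_floor_mul_div_add_inv (x : ℝ≥0) {K : ℕ} (hK : K ≠ 0) :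
    (x : ℝ≥0∞) ≤ (⌊K * x⌋₊ : ℝ≥0∞) / K + (K : ℝ≥0∞)⁻¹ := by
  have hKpos : (0 : ℝ≥0) < K := by positivity
  have : x ≤ (⌊K * x⌋₊ + 1) / K := by
    rw [le_div_iff₀ hKpos, mul_comm]
    exact (Nat.lt_floor_add_one _).le
  calc (x : ℝ≥0∞) ≤ ((⌊K * x⌋₊ + 1 : ℝ≥0) / K : ℝ≥0) := by exact_mod_cast this
    _ = (⌊K * x⌋₊ : ℝ≥0∞) / K + (K : ℝ≥0∞)⁻¹ := by
      rw [ENNReal.coe_div (by exact_mod_cast hK)]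
      push_cast
      rw [ENNReal.add_div, one_div]

theorem NNReal.sum_floor_mul_le {ι : Type*} (s : Finset ι) (p : ι → ℝ≥0) (hp : ∑ n ∈ s, p n ≤ 1)
    (K : ℕ) : ∑ n ∈ s, ⌊K * p n⌋₊ ≤ K := by
  have : (∑ n ∈ s, ⌊K * p n⌋₊ : ℝ≥0) ≤ K := calc
    _ ≤ ∑ n ∈ s, K * p n := Finset.sum_le_sum fun n _ => Nat.floor_le (by positivity)
    _ = K * ∑ n ∈ s, p n := (Finset.mul_sum ..).symm
    _ ≤ K := mul_le_of_le_one_right (by positivity) hp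
  exact_mod_cast this

section

variable {ι Θ : Type*} [MeasurableSpace Θ]

theorem exists_mem_pemK_eq_smul_sum_dirac (m : Multiset Θ) (hm : Multiset.card m ≠ 0) :
    ∃ ν ∈ PemK (Θ := Θ) (Multiset.card m),
      (ν : Measure Θ) = (Multiset.card m : ℝ≥0∞)⁻¹ • (m.map Measure.dirac).sum := by
  obtain ⟨θs, hθs⟩ := m.exists_fin_sum_eq_sum_map Measure.dirac
  have : IsProbabilityMeasure ((Multiset.card m : ℝ≥0∞)⁻¹ • (m.map Measure.dirac).sum) :=
    ⟨by simp [← hθs, ENNReal.inv_mul_cancel (Nat.cast_ne_zero.2 hm) (natCast_ne_top _)]⟩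
  exact ⟨⟨_, this⟩, ⟨θs, by rw [hθs]; rfl⟩, rfl⟩

theorem exists_mem_pemK_sum_smul_dirac_le [Nonempty Θ]
    (s : Finset ι) (a : ι → Θ) (c : ι → ℕ) {K : ℕ} (hK : K ≠ 0) (hc : ∑ n ∈ s, c n ≤ K) :
    ∃ ν ∈ PemK (Θ := Θ) K,
      ∑ n ∈ s, ((c n : ℝ≥0∞) / K) • Measure.dirac (a n) ≤ (ν : Measure Θ) := by
  set m₀ : Multiset Θ := ∑ n ∈ s, c n • {a n}
  have hm₀ : Multiset.card m₀ = ∑ n ∈ s, c n := by simp [m₀]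
  set m := m₀ + Multiset.replicate (K - Multiset.card m₀) (Classical.arbitrary Θ)
  have hm : Multiset.card m = K := by simp [m]; omega
  obtain ⟨ν, hν, hνm⟩ := exists_mem_pemK_eq_smul_sum_dirac m (hm ▸ hK)
  rw [hm] at hν hνm
  refine ⟨ν, hν, ?_⟩
  calc ∑ n ∈ s, ((c n : ℝ≥0∞) / K) • Measure.dirac (a n)
      = (K : ℝ≥0∞)⁻¹ • (m₀.map Measure.dirac).sum := by
        change _ = _ • (Multiset.sumAddMonoidHom.comp (Multiset.mapAddMonoidHom Measure.dirac)) _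
        simp only [m₀, map_sum, Finset.smul_sum]
        refine Finset.sum_congr rfl fun n _ => ?_
        simp [Multiset.map_nsmul, Multiset.sum_nsmul, ← Nat.cast_smul_eq_nsmul ℝ≥0∞, smul_smul,
          ENNReal.div_eq_inv_mul]
    _ ≤ ν := by
        rw [hνm]
        gcongr
        simp only [m, Multiset.map_add, Multiset.sum_add]
        exact Measure.le_add_right le_rfl

theorem measure_le_measure_thickening_add [PseudoMetricSpace Θ] {μ ν : Measure Θ} {s : Finset ι}
    {A : ι → Set Θ} {a : ι → Θ} {w : ι → ℝ≥0∞} {η : ℝ} {κ δ : ℝ≥0∞}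
    (hA : ∀ n ∈ s, A n ⊆ ball (a n) η)
    (hcover : μ (⋃ n ∈ s, A n)ᶜ ≤ δ) (hmass : ∀ n ∈ s, μ (A n) ≤ w n + κ)
    (hν : ∑ n ∈ s, w n • Measure.dirac (a n) ≤ ν) (B : Set Θ) :
    μ B ≤ ν (thickening η B) + (s.card * κ + δ) := by
  set T := thickening η B
  have hcell : ∀ n ∈ s, μ (B ∩ A n) ≤ (w n • Measure.dirac (a n)) T + κ := by
    intro n hn
    by_cases haT : a n ∈ T
    · simpa [Measure.dirac_apply_of_mem haT] using
        (measure_mono Set.inter_subset_right).trans (hmass n hn)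
    · have : B ∩ A n = ∅ := by
        refine Set.eq_empty_of_forall_notMem fun x ⟨hxB, hxA⟩ => haT ?_
        exact mem_thickening_iff.2 ⟨x, hxB, by simpa [dist_comm] using hA n hn hxA⟩
      simp [this]
  calc μ B ≤ μ (B ∩ ⋃ n ∈ s, A n) + μ (⋃ n ∈ s, A n)ᶜ :=
        (measure_le_inter_add_sdiff μ B _).trans (by gcongr; exact Set.sdiff_subset_compl _ _)
    _ ≤ ∑ n ∈ s, ((w n • Measure.dirac (a n)) T + κ) + δ := by
        gcongr
        rw [Set.inter_iUnion₂]
        exact (measure_biUnion_finset_le _ _).trans (Finset.sum_le_sum hcell)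
    _ ≤ ν T + (s.card * κ + δ) := by
        rw [Finset.sum_add_distrib, Finset.sum_const, nsmul_eq_mul, ← Measure.finsetSum_apply,
          ← add_assoc]
        gcongr

theorem exists_partition_subset_ball_measure_compl_lt [PseudoMetricSpace Θ] [SeparableSpace Θ]
    [OpensMeasurableSpace Θ] [Nonempty Θ] (μ : Measure Θ) [IsFiniteMeasure μ]
    {ε : ℝ} (hε : 0 < ε) {δ : ℝ≥0∞} (hδ : 0 < δ) :
    ∃ (N : ℕ) (A : ℕ → Set Θ) (a : ℕ → Θ), (∀ n, MeasurableSet (A n)) ∧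
      Pairwise (fun n m ↦ Disjoint (A n) (A m)) ∧ (∀ n, A n ⊆ ball (a n) ε) ∧
      μ (⋃ n ∈ Finset.range N, A n)ᶜ < δ := by
  classical
  obtain ⟨A, hAm, hAb, hAdiam, hAcover, hAdisj⟩ :=
    SeparableSpace.exists_measurable_partition_diam_le Θ (half_pos hε)
  let a n := if h : (A n).Nonempty then h.some else Classical.arbitrary Θ
  have hAa : ∀ n, A n ⊆ ball (a n) ε := by
    intro n x hx
    have hne : (A n).Nonempty := ⟨x, hx⟩
    have han : a n ∈ A n := by simpa only [a, dif_pos hne] using hne.some_mem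
    exact (dist_le_diam_of_mem (hAb n) hx han).trans_lt ((hAdiam n).trans_lt (half_lt_self hε))
  have hanti : Antitone fun N => (⋃ n ∈ Finset.range N, A n)ᶜ := fun N M hNM =>
    Set.compl_subset_compl.2 (Set.biUnion_subset_biUnion_left (by simpa using hNM))
  have hempty : ⋂ N, (⋃ n ∈ Finset.range N, A n)ᶜ = ∅ := by
    refine Set.eq_empty_of_forall_notMem fun x hx => ?_
    obtain ⟨n, hn⟩ := Set.mem_iUnion.1 (hAcover ▸ Set.mem_univ x)
    exact Set.mem_iInter.1 hx (n + 1) (Set.mem_biUnion (by simp) hn)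
  have hlim := tendsto_measure_iInter_atTop (μ := μ)
    (fun N => (Finset.measurableSet_biUnion _ fun n _ => hAm n).compl.nullMeasurableSet) hanti
    ⟨0, measure_ne_top _ _⟩
  rw [hempty, measure_empty] at hlim
  obtain ⟨N, hN⟩ := (hlim.eventually (gt_mem_nhds hδ)).exists
  exact ⟨N, A, a, hAm, hAdisj, hAa, hN⟩

theorem eventually_exists_mem_pemK_levyProkhorovEDist_le [PseudoMetricSpace Θ]
    [SeparableSpace Θ] [OpensMeasurableSpace Θ] (ρ : ProbabilityMeasure Θ)
    {ε : ℝ} (hε : 0 < ε) :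
    ∀ᶠ K in atTop, ∃ ν ∈ PemK (Θ := Θ) K,
      levyProkhorovEDist (ρ : Measure Θ) (ν : Measure Θ) ≤ ENNReal.ofReal (2 * ε) := by
  have := nonempty_of_isProbabilityMeasure (ρ : Measure Θ)
  obtain ⟨N, A, a, hAm, hAdisj, hAa, hcover⟩ :=
    exists_partition_subset_ball_measure_compl_lt (ρ : Measure Θ) hε (ENNReal.ofReal_pos.2 hε)
  have hmass_le_one : ∑ n ∈ Finset.range N, ρ (A n) ≤ 1 := by
    have h : ∑ n ∈ Finset.range N, (ρ : Measure Θ) (A n) ≤ 1 :=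
      (measure_biUnion_finset (fun i _ j _ hij => hAdisj hij) fun n _ => hAm n).symm.le.trans
        prob_le_one
    simp only [← ProbabilityMeasure.ennreal_coeFn_eq_coeFn_toMeasure] at h
    exact_mod_cast h
  have hsmall : ∀ᶠ K : ℕ in atTop, (N : ℝ≥0∞) * (K : ℝ≥0∞)⁻¹ < ENNReal.ofReal ε := by
    have := ENNReal.Tendsto.const_mul ENNReal.tendsto_inv_nat_nhds_zero (Or.inr (natCast_ne_top N))
    rw [mul_zero] at this
    exact this.eventually (gt_mem_nhds (ENNReal.ofReal_pos.2 hε))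
  filter_upwards [eventually_ne_atTop 0, hsmall] with K hK hNK
  obtain ⟨ν, hν, hνge⟩ := exists_mem_pemK_sum_smul_dirac_le (Finset.range N) a
    (fun n => ⌊K * ρ (A n)⌋₊) hK (NNReal.sum_floor_mul_le _ _ hmass_le_one K)
  refine ⟨ν, hν, levyProkhorovEDist_le_of_forall_le _ _ _ fun ε' B hε' hε'top _ => ?_⟩
  have hη : 2 * ε < ε'.toReal := (ENNReal.ofReal_lt_iff_lt_toReal (by positivity) hε'top.ne).1 hε'
  calc (ρ : Measure Θ) B
      ≤ (ν : Measure Θ) (thickening ε'.toReal B) +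
          ((Finset.range N).card * (K : ℝ≥0∞)⁻¹ + ENNReal.ofReal ε) :=
        measure_le_measure_thickening_add
          (fun n _ => (hAa n).trans (ball_subset_ball (by linarith))) hcover.le (fun n _ => by
            simpa [ProbabilityMeasure.ennreal_coeFn_eq_coeFn_toMeasure] using
              NNReal.coe_le_floor_mul_div_add_inv (ρ (A n)) hK) hνge B
    _ ≤ (ν : Measure Θ) (thickening ε'.toReal B) + ε' := by
        gcongr
        calc ((Finset.range N).card : ℝ≥0∞) * (K : ℝ≥0∞)⁻¹ + ENNReal.ofReal ε
            ≤ ENNReal.ofReal ε + ENNReal.ofReal ε := by rw [Finset.card_range]; gcongr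
          _ = ENNReal.ofReal (2 * ε) := by rw [← ENNReal.ofReal_add hε.le hε.le, two_mul]
          _ ≤ ε' := hε'.le

theorem eventually_exists_mem_pemK_of_mem_nhds [TopologicalSpace Θ] [PseudoMetrizableSpace Θ]
    [SeparableSpace Θ] [OpensMeasurableSpace Θ]
    {ρ : ProbabilityMeasure Θ} {U : Set (ProbabilityMeasure Θ)} (hU : U ∈ 𝓝 ρ) :
    ∀ᶠ K in atTop, ∃ ν ∈ PemK K, ν ∈ U := by
  let := pseudoMetrizableSpacePseudoMetric Θ
  have hU' : LevyProkhorov.toMeasure ⁻¹' U ∈ 𝓝 (LevyProkhorov.ofMeasure ρ) :=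
    LevyProkhorov.continuous_toMeasure_probabilityMeasure.continuousAt.preimage_mem_nhds hU
  obtain ⟨δ, hδ, hball⟩ := Metric.mem_nhds_iff.1 hU'
  filter_upwards [eventually_exists_mem_pemK_levyProkhorovEDist_le ρ (by positivity : 0 < δ / 4)]
    with K ⟨ν, hν, hνρ⟩
  refine ⟨ν, hν, hball ?_⟩
  rw [mem_ball, LevyProkhorov.dist_probabilityMeasure_def, levyProkhorovDist_comm]
  exact (ENNReal.toReal_le_of_le_ofReal (by positivity) hνρ).trans_lt (by linarith)

theorem tendsto_apply_of_eventually_isMinOn_pemK [TopologicalSpace Θ] [PseudoMetrizableSpace Θ]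
    [SeparableSpace Θ] [OpensMeasurableSpace Θ]
    {E : ProbabilityMeasure Θ → ℝ} (hE : Continuous E) {ρstar : ProbabilityMeasure Θ}
    (hmin : ∀ ν, E ρstar ≤ E ν) {ρK : ℕ → ProbabilityMeasure Θ}
    (hρK : ∀ᶠ K in atTop, IsMinOn E (PemK K) (ρK K)) :
    Tendsto (fun K => E (ρK K)) atTop (𝓝 (E ρstar)) := by
  refine tendsto_order.2 ⟨fun b hb => .of_forall fun K => hb.trans_le (hmin _), fun b hb => ?_⟩
  have hU : E ⁻¹' Set.Iio b ∈ 𝓝 ρstar := hE.continuousAt.preimage_mem_nhds (Iio_mem_nhds hb)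
  filter_upwards [eventually_exists_mem_pemK_of_mem_nhds hU, hρK] with K ⟨ν, hν, hνb⟩ hK
  exact (isMinOn_iff.1 hK ν hν).trans_lt hνb

end

theorem stmt_5_general {Θ : Type*} [TopologicalSpace Θ] [PolishSpace Θ]
    [MeasurableSpace Θ] [BorelSpace Θ]
    (E : ProbabilityMeasure Θ → ℝ) (hE : Continuous E)
    (ρstar : ProbabilityMeasure Θ)
    (hmin : ∀ ν : ProbabilityMeasure Θ, E ρstar ≤ E ν)
    (ρK : ℕ → ProbabilityMeasure Θ)
    (hρK : ∀ K : ℕ, 1 ≤ K → ρK K ∈ PemK K ∧ ∀ ν ∈ PemK (Θ := Θ) K, E (ρK K) ≤ E ν)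
    (d : ProbabilityMeasure Θ × ProbabilityMeasure Θ → ℝ)
    (hd0 : ∀ p, 0 ≤ d p)
    (C α : ℝ) (hα : 0 < α)
    (hLoj : ∀ ν : ProbabilityMeasure Θ, d (ν, ρstar) ≤ C * |E ν - E ρstar| ^ α) :
    Tendsto (fun K => d (ρK K, ρstar)) atTop (𝓝 0) := by
  have hEK : Tendsto (fun K => E (ρK K)) atTop (𝓝 (E ρstar)) :=
    tendsto_apply_of_eventually_isMinOn_pemK hE hmin
      (eventually_atTop.2 ⟨1, fun K hK => isMinOn_iff.2 (hρK K hK).2⟩)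
  have hbound : Tendsto (fun K => C * |E (ρK K) - E ρstar| ^ α) atTop (𝓝 0) := by
    simpa [Real.zero_rpow hα.ne'] using
      (((hEK.sub_const (E ρstar)).abs.rpow_const (Or.inr hα.le)).const_mul C)
  exact squeeze_zero (fun K => hd0 _) (fun K => hLoj _) hbound

/-- If `E` is continuous (weak topology) with a unique global minimizer
`ρ*`, minimizers `ρ^K` over `K`-particle empirical measures exist, and `d` satisfies a
Łojasiewicz-type inequality at `ρ*`, then `d(ρ^K, ρ*) → 0`. -/
theorem stmt_5 {Θ : Type*} [TopologicalSpace Θ] [PolishSpace Θ]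
    [MeasurableSpace Θ] [BorelSpace Θ] [Nonempty Θ]
    (E : ProbabilityMeasure Θ → ℝ) (hE : Continuous E)
    (ρstar : ProbabilityMeasure Θ)
    (hmin : ∀ ν : ProbabilityMeasure Θ, E ρstar ≤ E ν)
    (huniq : ∀ ν : ProbabilityMeasure Θ, E ν = E ρstar → ν = ρstar)
    (ρK : ℕ → ProbabilityMeasure Θ)
    (hρK : ∀ K : ℕ, 1 ≤ K → ρK K ∈ PemK K ∧ ∀ ν ∈ PemK (Θ := Θ) K, E (ρK K) ≤ E ν)
    (d : ProbabilityMeasure Θ × ProbabilityMeasure Θ → ℝ)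
    (hd0 : ∀ p, 0 ≤ d p)
    (C α : ℝ) (hC : 0 < C) (hα : 0 < α)
    (hLoj : ∀ ν : ProbabilityMeasure Θ, d (ν, ρstar) ≤ C * |E ν - E ρstar| ^ α) :
    Tendsto (fun K => d (ρK K, ρstar)) atTop (𝓝 0) :=
  stmt_5_general E hE ρstar hmin ρK hρK d hd0 C α hα hLoj
end

section
/- Let E be a separable Banach space with its Borel σ-algebra, and let μ and ν be Borel probability measures on E with finite first moments, i.e., ∫‖x‖ dμ(x) < ∞ and ∫‖y‖ dν(y) < ∞. Define the kernel k(x,y) = ‖x‖ + ‖y‖ − ‖x − y‖. Then the squared Maximum Mean Discrepancy with kernel k satisfies MMD_k²(μ, ν) = 2 ∬ ‖x − y‖ dμ(x) dν(y) − ∬ ‖x − x'‖ dμ(x) dμ(x') − ∬ ‖y − y'‖ dν(y) dν(y'); that is, the squared energy distance between μ and ν equals the squared MMD with kernel k. -/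
/-!
Expanding `k`, each double integral `∬ k dρ dσ` splits into the first moments of `ρ` and `σ`
minus the mean distance `∬ ‖x - y‖ dρ dσ`, and in `MMD²` the first moments cancel.
The inner integral `x ↦ ∫ ‖x - y‖ dσ` is `1`-Lipschitz, hence measurable, and bounded by
`‖x‖ + ∫ ‖y‖ dσ`, which makes every integral involved integrable.
-/

open MeasureTheory

section EnergyKernel

variable {E : Type*} [NormedAddCommGroup E] [MeasurableSpace E]
  {ρ σ : Measure E} [IsProbabilityMeasure σ]

lemma integrable_const_add_norm {μ : Measure E} [IsFiniteMeasure μ]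
    (hμ : Integrable (fun y => ‖y‖) μ) (c : ℝ) : Integrable (fun y => c + ‖y‖) μ :=
  (integrable_const c).add hμ

lemma integral_const_add_norm (hσ : Integrable (fun y => ‖y‖) σ) (c : ℝ) :
    ∫ y, c + ‖y‖ ∂σ = c + ∫ y, ‖y‖ ∂σ := by
  rw [integral_add (integrable_const c) hσ, integral_const, probReal_univ, one_smul]

variable [BorelSpace E]

lemma integrable_norm_sub_left (hσ : Integrable (fun y => ‖y‖) σ) (x : E) :
    Integrable (fun y => ‖x - y‖) σ := by
  refine ((integrable_const ‖x‖).add hσ).mono'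
    (continuous_const.sub continuous_id).norm.aestronglyMeasurable ?_
  filter_upwards with y
  simpa using norm_sub_le x y

lemma integral_norm_sub_le (hσ : Integrable (fun y => ‖y‖) σ) (x : E) :
    ∫ y, ‖x - y‖ ∂σ ≤ ‖x‖ + ∫ y, ‖y‖ ∂σ := by
  rw [← integral_const_add_norm hσ]
  exact integral_mono (integrable_norm_sub_left hσ x) (integrable_const_add_norm hσ _)
    fun y => norm_sub_le x y

lemma lipschitzWith_integral_norm_sub (hσ : Integrable (fun y => ‖y‖) σ) :
    LipschitzWith 1 (fun x => ∫ y, ‖x - y‖ ∂σ) := by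
  refine LipschitzWith.of_le_add fun x x' => ?_
  calc ∫ y, ‖x - y‖ ∂σ ≤ ∫ y, dist x x' + ‖x' - y‖ ∂σ := by
        refine integral_mono (integrable_norm_sub_left hσ x)
          ((integrable_const _).add (integrable_norm_sub_left hσ x')) fun y => ?_
        simpa [dist_eq_norm] using norm_sub_le_norm_sub_add_norm_sub x x' y
    _ = ∫ y, ‖x' - y‖ ∂σ + dist x x' := by
        rw [integral_add (integrable_const _) (integrable_norm_sub_left hσ x'),
          integral_const, probReal_univ, one_smul, add_comm]

lemma integrable_integral_norm_sub [IsFiniteMeasure ρ] (hρ : Integrable (fun x => ‖x‖) ρ)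
    (hσ : Integrable (fun y => ‖y‖) σ) :
    Integrable (fun x => ∫ y, ‖x - y‖ ∂σ) ρ := by
  refine (integrable_const_add_norm hρ (∫ y, ‖y‖ ∂σ)).mono'
    (lipschitzWith_integral_norm_sub hσ).continuous.aestronglyMeasurable ?_
  filter_upwards with x
  rw [Real.norm_of_nonneg (integral_nonneg fun y => norm_nonneg _), add_comm]
  exact integral_norm_sub_le hσ x

lemma integral_integral_energyKernel [IsProbabilityMeasure ρ]
    (hρ : Integrable (fun x => ‖x‖) ρ) (hσ : Integrable (fun y => ‖y‖) σ) :
    ∫ x, ∫ y, ‖x‖ + ‖y‖ - ‖x - y‖ ∂σ ∂ρ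
      = (∫ x, ‖x‖ ∂ρ) + (∫ y, ‖y‖ ∂σ) - ∫ x, ∫ y, ‖x - y‖ ∂σ ∂ρ := by
  have inner (x : E) : ∫ y, ‖x‖ + ‖y‖ - ‖x - y‖ ∂σ
      = (∫ y, ‖y‖ ∂σ) + ‖x‖ - ∫ y, ‖x - y‖ ∂σ := by
    rw [integral_sub (integrable_const_add_norm hσ _) (integrable_norm_sub_left hσ x),
      integral_const_add_norm hσ]
    ring
  simp_rw [inner]
  rw [integral_sub (integrable_const_add_norm hρ _) (integrable_integral_norm_sub hρ hσ),
    integral_const_add_norm hρ]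
  ring

end EnergyKernel

theorem stmt_7_general {E : Type*} [NormedAddCommGroup E]
    [MeasurableSpace E] [BorelSpace E]
    (μ ν : Measure E) [IsProbabilityMeasure μ] [IsProbabilityMeasure ν]
    (hμ : Integrable (fun x => ‖x‖) μ) (hν : Integrable (fun y => ‖y‖) ν)
    (k : E → E → ℝ) (hk : ∀ x y, k x y = ‖x‖ + ‖y‖ - ‖x - y‖) :
    (∫ x, ∫ x', k x x' ∂μ ∂μ) + (∫ y, ∫ y', k y y' ∂ν ∂ν)
      - 2 * ∫ x, ∫ y, k x y ∂ν ∂μ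
    = 2 * (∫ x, ∫ y, ‖x - y‖ ∂ν ∂μ)
      - (∫ x, ∫ x', ‖x - x'‖ ∂μ ∂μ) - (∫ y, ∫ y', ‖y - y'‖ ∂ν ∂ν) := by
  obtain rfl : k = fun x y => ‖x‖ + ‖y‖ - ‖x - y‖ := funext₂ hk
  rw [integral_integral_energyKernel hμ hμ, integral_integral_energyKernel hν hν,
    integral_integral_energyKernel hμ hν]
  ring

/-- On a separable Banach space, the squared MMD with the energy-distance
kernel `k(x,y) = ‖x‖ + ‖y‖ − ‖x − y‖` equals the squared energy distance. -/
theorem stmt_7 {E : Type*} [NormedAddCommGroup E] [NormedSpace ℝ E] [CompleteSpace E]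
    [TopologicalSpace.SeparableSpace E] [MeasurableSpace E] [BorelSpace E]
    (μ ν : Measure E) [IsProbabilityMeasure μ] [IsProbabilityMeasure ν]
    (hμ : Integrable (fun x => ‖x‖) μ) (hν : Integrable (fun y => ‖y‖) ν)
    (k : E → E → ℝ) (hk : ∀ x y, k x y = ‖x‖ + ‖y‖ - ‖x - y‖) :
    (∫ x, ∫ x', k x x' ∂μ ∂μ) + (∫ y, ∫ y', k y y' ∂ν ∂ν)
      - 2 * ∫ x, ∫ y, k x y ∂ν ∂μ
    = 2 * (∫ x, ∫ y, ‖x - y‖ ∂ν ∂μ)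
      - (∫ x, ∫ x', ‖x - x'‖ ∂μ ∂μ) - (∫ y, ∫ y', ‖y - y'‖ ∂ν ∂ν) :=
  stmt_7_general μ ν hμ hν k hk
end

section
/- Let Y be a measurable space, let k : Y × Y → ℝ be a bounded, measurable, symmetric kernel, and let μ, ν, η be probability measures on Y. Define the functional J(ρ) = (1/2) ∬ k(y,y') dρ(y) dρ(y') − ∬ k(y,y') dρ(y) dν(y') and the function g(y) = ∫ k(y,y') dμ(y') − ∫ k(y,y') dν(y'). Then the function f(ε) = J((1−ε)μ + εη), defined for ε ∈ [0,1], has right derivative at ε = 0 equal to ∫ g dη − ∫ g dμ; that is, f has derivative ∫ g dη − ∫ g dμ at 0 within [0,1]. -/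
/-!
Integrals of a bounded measurable kernel are bilinear in the pair of measures, so along the
segment `ε ↦ (1 - ε) μ + ε η` the functional is a quadratic polynomial in `ε` on `[0, 1]`, whose
derivative at `0` is its linear coefficient. Symmetry of `k` identifies `∬ k dη dμ` with
`∬ k dμ dη`, and the linear coefficient becomes `∫ g dη - ∫ g dμ`.
-/

open MeasureTheory Set

section BoundedKernel

variable {Y : Type*} [MeasurableSpace Y] {k : Y → Y → ℝ} {M : ℝ}

lemma integrable_uncurry_of_abs_le (hk : Measurable fun p : Y × Y => k p.1 p.2)
    (hM : ∀ y y', |k y y'| ≤ M) (ρ σ : Measure Y) [IsFiniteMeasure ρ] [IsFiniteMeasure σ] :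
    Integrable (fun p : Y × Y => k p.1 p.2) (ρ.prod σ) :=
  (integrable_const M).mono' hk.aestronglyMeasurable
    (.of_forall fun p => by simpa using hM p.1 p.2)

lemma integrable_section_of_abs_le (hk : Measurable fun p : Y × Y => k p.1 p.2)
    (hM : ∀ y y', |k y y'| ≤ M) (σ : Measure Y) [IsFiniteMeasure σ] (y : Y) :
    Integrable (fun y' => k y y') σ :=
  (integrable_const M).mono' (hk.comp measurable_prodMk_left).aestronglyMeasurable
    (.of_forall fun y' => by simpa using hM y y')

lemma integrable_integral_of_abs_le (hk : Measurable fun p : Y × Y => k p.1 p.2)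
    (hM : ∀ y y', |k y y'| ≤ M) (ρ σ : Measure Y) [IsFiniteMeasure ρ] [IsFiniteMeasure σ] :
    Integrable (fun y => ∫ y', k y y' ∂σ) ρ :=
  (integrable_uncurry_of_abs_le hk hM ρ σ).integral_prod_left

lemma integral_integral_swap_of_symm (hk : Measurable fun p : Y × Y => k p.1 p.2)
    (hM : ∀ y y', |k y y'| ≤ M) (hk_symm : ∀ y y', k y y' = k y' y)
    (ρ σ : Measure Y) [IsFiniteMeasure ρ] [IsFiniteMeasure σ] :
    ∫ y, ∫ y', k y y' ∂σ ∂ρ = ∫ y, ∫ y', k y y' ∂ρ ∂σ := by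
  rw [integral_integral_swap (integrable_uncurry_of_abs_le hk hM ρ σ)]
  simp_rw [hk_symm]

end BoundedKernel

lemma integral_mixture {Y : Type*} [MeasurableSpace Y] {μ η : Measure Y} {h : Y → ℝ}
    (hμ : Integrable h μ) (hη : Integrable h η) {ε : ℝ} (hε : ε ∈ Icc (0 : ℝ) 1) :
    ∫ y, h y ∂(ENNReal.ofReal (1 - ε) • μ + ENNReal.ofReal ε • η)
      = (1 - ε) * ∫ y, h y ∂μ + ε * ∫ y, h y ∂η := by
  rw [integral_add_measure (hμ.smul_measure ENNReal.ofReal_ne_top)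
      (hη.smul_measure ENNReal.ofReal_ne_top), integral_smul_measure, integral_smul_measure,
    ENNReal.toReal_ofReal (by linarith [hε.2]), ENNReal.toReal_ofReal hε.1, smul_eq_mul,
    smul_eq_mul]

lemma integral_integral_mixture_of_symm {Y : Type*} [MeasurableSpace Y] {k : Y → Y → ℝ}
    {M : ℝ} (hk : Measurable fun p : Y × Y => k p.1 p.2) (hM : ∀ y y', |k y y'| ≤ M)
    (hk_symm : ∀ y y', k y y' = k y' y) (μ η : Measure Y) [IsFiniteMeasure μ]
    [IsFiniteMeasure η] {ε : ℝ} (hε : ε ∈ Icc (0 : ℝ) 1) :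
    ∫ y, ∫ y', k y y' ∂(ENNReal.ofReal (1 - ε) • μ + ENNReal.ofReal ε • η)
        ∂(ENNReal.ofReal (1 - ε) • μ + ENNReal.ofReal ε • η)
      = (1 - ε) ^ 2 * ∫ y, ∫ y', k y y' ∂μ ∂μ
        + 2 * ε * (1 - ε) * ∫ y, ∫ y', k y y' ∂μ ∂η
        + ε ^ 2 * ∫ y, ∫ y', k y y' ∂η ∂η := by
  have hint := integrable_integral_of_abs_le hk hM
  simp_rw [integral_mixture (integrable_section_of_abs_le hk hM μ _)
    (integrable_section_of_abs_le hk hM η _) hε]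
  rw [integral_mixture (h := fun y => (1 - ε) * (∫ y', k y y' ∂μ) + ε * ∫ y', k y y' ∂η)
      (((hint μ μ).const_mul _).add ((hint μ η).const_mul _))
      (((hint η μ).const_mul _).add ((hint η η).const_mul _)) hε,
    integral_add ((hint μ μ).const_mul _) ((hint μ η).const_mul _),
    integral_add ((hint η μ).const_mul _) ((hint η η).const_mul _),
    integral_const_mul, integral_const_mul, integral_const_mul, integral_const_mul,
    integral_integral_swap_of_symm hk hM hk_symm μ η]
  ring

lemma hasDerivAt_quadratic_zero (a b c : ℝ) :
    HasDerivAt (fun x : ℝ => a * x ^ 2 + b * x + c) b 0 := by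
  simpa using (((hasDerivAt_pow 2 (0 : ℝ)).const_mul a).add
    ((hasDerivAt_id (0 : ℝ)).const_mul b)).add_const c

/-- First variation of the MMD-type functional
`J(ρ) = (1/2)∬ k dρ dρ − ∬ k(y,y') dρ(y) dν(y')` at `μ` in the direction of the mixture
with `η`: the map `ε ↦ J((1−ε)μ + εη)` has right derivative `∫ g dη − ∫ g dμ` at `0`,
where `g(y) = ∫ k(y,y') dμ(y') − ∫ k(y,y') dν(y')`. -/
theorem stmt_8 {Y : Type*} [MeasurableSpace Y]
    (k : Y → Y → ℝ) (hk_meas : Measurable fun p : Y × Y => k p.1 p.2)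
    (hk_bdd : ∃ M : ℝ, ∀ y y', |k y y'| ≤ M)
    (hk_symm : ∀ y y', k y y' = k y' y)
    (μ ν η : Measure Y)
    [IsProbabilityMeasure μ] [IsProbabilityMeasure ν] [IsProbabilityMeasure η]
    (mix : ℝ → Measure Y)
    (hmix : ∀ ε : ℝ, mix ε = ENNReal.ofReal (1 - ε) • μ + ENNReal.ofReal ε • η)
    (f : ℝ → ℝ)
    (hf : ∀ ε : ℝ, f ε = (1 / 2) * (∫ y, ∫ y', k y y' ∂(mix ε) ∂(mix ε))
      - ∫ y, ∫ y', k y y' ∂ν ∂(mix ε))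
    (g : Y → ℝ)
    (hg : ∀ y, g y = (∫ y', k y y' ∂μ) - ∫ y', k y y' ∂ν) :
    HasDerivWithinAt f ((∫ y, g y ∂η) - ∫ y, g y ∂μ) (Set.Icc (0 : ℝ) 1) 0 := by
  obtain ⟨M, hM⟩ := hk_bdd
  have hint := integrable_integral_of_abs_le hk_meas hM
  set A := ∫ y, ∫ y', k y y' ∂μ ∂μ
  set B := ∫ y, ∫ y', k y y' ∂μ ∂η
  set C := ∫ y, ∫ y', k y y' ∂η ∂η
  set D := ∫ y, ∫ y', k y y' ∂ν ∂μ
  set E := ∫ y, ∫ y', k y y' ∂ν ∂η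
  have hf_quadratic : ∀ ε ∈ Icc (0 : ℝ) 1,
      f ε = (A / 2 - B + C / 2) * ε ^ 2 + (B - A + D - E) * ε + (A / 2 - D) := by
    intro ε hε
    rw [hf, hmix, integral_integral_mixture_of_symm hk_meas hM hk_symm μ η hε,
      integral_mixture (hint μ ν) (hint η ν) hε]
    ring
  have hg_integral : (∫ y, g y ∂η) - ∫ y, g y ∂μ = B - A + D - E := by
    simp_rw [hg]
    rw [integral_sub (hint η μ) (hint η ν), integral_sub (hint μ μ) (hint μ ν)]
    ring
  rw [hg_integral]
  exact (hasDerivAt_quadratic_zero _ _ _).hasDerivWithinAt.congr hf_quadratic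
    (hf_quadratic 0 ⟨le_rfl, zero_le_one⟩)
end

section
/- Let (Ω, ℱ, P) be a probability space, S a measurable space, and k : S × S → ℝ a bounded, measurable, symmetric kernel. Let m, n ≥ 2, let X_1, …, X_m be random variables with values in S each with law μ, let Y_1, …, Y_n be random variables with values in S each with law ν, and assume the family (X_1, …, X_m, Y_1, …, Y_n) is mutually independent. Then E[ (1/(m(m−1))) ∑_{i ≠ i'} k(X_i, X_{i'}) + (1/(n(n−1))) ∑_{j ≠ j'} k(Y_j, Y_{j'}) − (2/(mn)) ∑_{i=1}^m ∑_{j=1}^n k(X_i, Y_j) ] = MMD_k²(μ, ν); that is, the empirical estimator of the squared MMD is unbiased. -/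
/-!
Each summand of the estimator is `k` evaluated at two independent samples, so its expectation
is one of the three double integrals of `MMD²`: independence turns the joint law into a product
measure, and Fubini splits the integral. There are `m (m - 1)`, `n (n - 1)` and `m n` summands
of the three kinds, which cancels the normalising constants.
-/

open MeasureTheory ProbabilityTheory

section

variable {Ω ι κ α β : Type*} [MeasurableSpace Ω] [MeasurableSpace α] [MeasurableSpace β]
  {P : Measure Ω} [IsFiniteMeasure P] {M : ℝ}

lemma ProbabilityTheory.IndepFun.integral_comp_eq_integral_integral {k : α → β → ℝ}
    {f : Ω → α} {g : Ω → β} (hfg : IndepFun f g P) (hf : Measurable f) (hg : Measurable g)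
    (hk : Measurable fun p : α × β => k p.1 p.2)
    (hint : Integrable (fun ω => k (f ω) (g ω)) P) :
    ∫ ω, k (f ω) (g ω) ∂P = ∫ x, ∫ y, k x y ∂(P.map g) ∂(P.map f) := by
  have hmap : P.map (fun ω => (f ω, g ω)) = (P.map f).prod (P.map g) :=
    (indepFun_iff_map_prod_eq_prod_map_map hf.aemeasurable hg.aemeasurable).mp hfg
  have hint_prod : Integrable (fun p : α × β => k p.1 p.2) ((P.map f).prod (P.map g)) := by
    rw [← hmap]
    exact (integrable_map_measure hk.aestronglyMeasurable (hf.prodMk hg).aemeasurable).mpr hint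
  rw [← integral_prod _ hint_prod, ← hmap,
    integral_map (hf.prodMk hg).aemeasurable hk.aestronglyMeasurable]

lemma integrable_comp_of_abs_le {k : α → β → ℝ} (hk : Measurable fun p : α × β => k p.1 p.2)
    (hM : ∀ x y, |k x y| ≤ M) {f : Ω → α} {g : Ω → β} (hf : Measurable f) (hg : Measurable g) :
    Integrable (fun ω => k (f ω) (g ω)) P :=
  (integrable_const M).mono' (hk.comp (hf.prodMk hg)).aestronglyMeasurable
    (.of_forall fun ω => by simpa using hM (f ω) (g ω))

lemma integral_finset_sum_comp_of_indepFun {k : α → β → ℝ} {μ : Measure α} {ν : Measure β}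
    (hk : Measurable fun p : α × β => k p.1 p.2) (hM : ∀ x y, |k x y| ≤ M) (s : Finset ι)
    {f : ι → Ω → α} {g : ι → Ω → β} (hf : ∀ i, Measurable (f i)) (hg : ∀ i, Measurable (g i))
    (hfμ : ∀ i ∈ s, P.map (f i) = μ) (hgν : ∀ i ∈ s, P.map (g i) = ν)
    (hfg : ∀ i ∈ s, IndepFun (f i) (g i) P) :
    ∫ ω, ∑ i ∈ s, k (f i ω) (g i ω) ∂P = s.card * ∫ x, ∫ y, k x y ∂ν ∂μ := by
  have hint i : Integrable (fun ω => k (f i ω) (g i ω)) P :=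
    integrable_comp_of_abs_le hk hM (hf i) (hg i)
  have hE : ∀ i ∈ s, ∫ ω, k (f i ω) (g i ω) ∂P = ∫ x, ∫ y, k x y ∂ν ∂μ := fun i hi => by
    rw [(hfg i hi).integral_comp_eq_integral_integral (hf i) (hg i) hk (hint i), hfμ i hi,
      hgν i hi]
  rw [integral_finsetSum s fun i _ => hint i, Finset.sum_congr rfl hE, Finset.sum_const,
    nsmul_eq_mul]

lemma ProbabilityTheory.iIndepFun.integral_sum_offDiag_comp {k : α → α → ℝ} {μ : Measure α}
    (hk : Measurable fun p : α × α => k p.1 p.2) (hM : ∀ x y, |k x y| ≤ M)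
    {Z : ι → Ω → α} (hZ : iIndepFun Z P) (hZm : ∀ i, Measurable (Z i))
    (hZμ : ∀ i, P.map (Z i) = μ) (s : Finset ι) :
    ∫ ω, ∑ p ∈ s.offDiag, k (Z p.1 ω) (Z p.2 ω) ∂P
      = s.offDiag.card * ∫ x, ∫ x', k x x' ∂μ ∂μ :=
  integral_finset_sum_comp_of_indepFun hk hM s.offDiag (fun p => hZm p.1) (fun p => hZm p.2)
    (fun p _ => hZμ p.1) (fun p _ => hZμ p.2)
    fun _ hp => hZ.indepFun (Finset.mem_offDiag.mp hp).2.2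

lemma integral_sum_sum_comp_of_indepFun {k : α → β → ℝ} {μ : Measure α} {ν : Measure β}
    (hk : Measurable fun p : α × β => k p.1 p.2) (hM : ∀ x y, |k x y| ≤ M)
    {X : ι → Ω → α} {Y : κ → Ω → β} (hXm : ∀ i, Measurable (X i)) (hYm : ∀ j, Measurable (Y j))
    (hXμ : ∀ i, P.map (X i) = μ) (hYν : ∀ j, P.map (Y j) = ν)
    (hXY : ∀ i j, IndepFun (X i) (Y j) P) (s : Finset ι) (t : Finset κ) :
    ∫ ω, ∑ i ∈ s, ∑ j ∈ t, k (X i ω) (Y j ω) ∂P = s.card * t.card * ∫ x, ∫ y, k x y ∂ν ∂μ := by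
  simp_rw [← Finset.sum_product']
  rw [integral_finset_sum_comp_of_indepFun hk hM (s ×ˢ t) (fun p => hXm p.1) (fun p => hYm p.2)
    (fun p _ => hXμ p.1) (fun p _ => hYν p.2) fun p _ => hXY p.1 p.2, Finset.card_product]
  push_cast
  ring

end

lemma card_offDiag_univ_fin (m : ℕ) :
    ((Finset.univ : Finset (Fin m)).offDiag.card : ℝ) = m * (m - 1) := by
  rcases Nat.eq_zero_or_pos m with rfl | hm
  · simp
  · rw [Finset.offDiag_card, Finset.card_univ, Fintype.card_fin,
      Nat.cast_sub (Nat.le_mul_of_pos_left m hm)]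
    push_cast
    ring

theorem stmt_10_general {Ω S : Type*} [MeasurableSpace Ω] [MeasurableSpace S]
    (P : Measure Ω) [IsProbabilityMeasure P]
    (k : S → S → ℝ) (hk_meas : Measurable fun p : S × S => k p.1 p.2)
    (hk_bdd : ∃ M : ℝ, ∀ x y, |k x y| ≤ M)
    (m n : ℕ) (hm : 2 ≤ m) (hn : 2 ≤ n)
    (μ ν : Measure S) [IsProbabilityMeasure μ] [IsProbabilityMeasure ν]
    (X : Fin m → Ω → S) (Y : Fin n → Ω → S)
    (hX : ∀ i, Measurable (X i) ∧ Measure.map (X i) P = μ)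
    (hY : ∀ j, Measurable (Y j) ∧ Measure.map (Y j) P = ν)
    (hindep : iIndepFun (Sum.elim X Y) P) :
    ∫ ω, ((1 / ((m : ℝ) * ((m : ℝ) - 1))) *
        ∑ p ∈ (Finset.univ : Finset (Fin m)).offDiag, k (X p.1 ω) (X p.2 ω)
      + (1 / ((n : ℝ) * ((n : ℝ) - 1))) *
        ∑ p ∈ (Finset.univ : Finset (Fin n)).offDiag, k (Y p.1 ω) (Y p.2 ω)
      - (2 / ((m : ℝ) * (n : ℝ))) * ∑ i : Fin m, ∑ j : Fin n, k (X i ω) (Y j ω)) ∂P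
    = (∫ x, ∫ x', k x x' ∂μ ∂μ) + (∫ y, ∫ y', k y y' ∂ν ∂ν)
      - 2 * ∫ x, ∫ y, k x y ∂ν ∂μ := by
  obtain ⟨M, hM⟩ := hk_bdd
  have hXm i := (hX i).1
  have hYm j := (hY j).1
  have hXind : iIndepFun X P := by simpa using hindep.precomp Sum.inl_injective
  have hYind : iIndepFun Y P := by simpa using hindep.precomp Sum.inr_injective
  have hint {f g : Ω → S} (hf : Measurable f) (hg : Measurable g) :=
    integrable_comp_of_abs_le (P := P) hk_meas hM hf hg
  have hIXX := integrable_finsetSum (Finset.univ : Finset (Fin m)).offDiag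
    fun p _ => hint (hXm p.1) (hXm p.2)
  have hIYY := integrable_finsetSum (Finset.univ : Finset (Fin n)).offDiag
    fun p _ => hint (hYm p.1) (hYm p.2)
  have hIXY := integrable_finsetSum Finset.univ fun i _ =>
    integrable_finsetSum Finset.univ fun j _ => hint (hXm i) (hYm j)
  rw [integral_sub (by exact (hIXX.const_mul _).add (hIYY.const_mul _)) (hIXY.const_mul _),
    integral_add (hIXX.const_mul _) (hIYY.const_mul _), integral_const_mul, integral_const_mul,
    integral_const_mul,
    hXind.integral_sum_offDiag_comp hk_meas hM hXm (fun i => (hX i).2),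
    hYind.integral_sum_offDiag_comp hk_meas hM hYm (fun j => (hY j).2),
    integral_sum_sum_comp_of_indepFun hk_meas hM hXm hYm (fun i => (hX i).2) (fun j => (hY j).2)
      (fun i j => hindep.indepFun Sum.inl_ne_inr),
    card_offDiag_univ_fin, card_offDiag_univ_fin, Finset.card_univ, Finset.card_univ,
    Fintype.card_fin, Fintype.card_fin]
  have hm1 : (m : ℝ) - 1 ≠ 0 := sub_ne_zero.mpr (by norm_cast; omega)
  have hn1 : (n : ℝ) - 1 ≠ 0 := sub_ne_zero.mpr (by norm_cast; omega)
  field_simp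

/-- Unbiasedness of the empirical estimator of the squared MMD:
its expectation equals
`∬ k dμ dμ + ∬ k dν dν − 2 ∬ k dμ dν`. -/
theorem stmt_10 {Ω S : Type*} [MeasurableSpace Ω] [MeasurableSpace S]
    (P : Measure Ω) [IsProbabilityMeasure P]
    (k : S → S → ℝ) (hk_meas : Measurable fun p : S × S => k p.1 p.2)
    (hk_bdd : ∃ M : ℝ, ∀ x y, |k x y| ≤ M)
    (hk_symm : ∀ x y, k x y = k y x)
    (m n : ℕ) (hm : 2 ≤ m) (hn : 2 ≤ n)
    (μ ν : Measure S) [IsProbabilityMeasure μ] [IsProbabilityMeasure ν]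
    (X : Fin m → Ω → S) (Y : Fin n → Ω → S)
    (hX : ∀ i, Measurable (X i) ∧ Measure.map (X i) P = μ)
    (hY : ∀ j, Measurable (Y j) ∧ Measure.map (Y j) P = ν)
    (hindep : iIndepFun (Sum.elim X Y) P) :
    ∫ ω, ((1 / ((m : ℝ) * ((m : ℝ) - 1))) *
        ∑ p ∈ (Finset.univ : Finset (Fin m)).offDiag, k (X p.1 ω) (X p.2 ω)
      + (1 / ((n : ℝ) * ((n : ℝ) - 1))) *
        ∑ p ∈ (Finset.univ : Finset (Fin n)).offDiag, k (Y p.1 ω) (Y p.2 ω)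
      - (2 / ((m : ℝ) * (n : ℝ))) * ∑ i : Fin m, ∑ j : Fin n, k (X i ω) (Y j ω)) ∂P
    = (∫ x, ∫ x', k x x' ∂μ ∂μ) + (∫ y, ∫ y', k y y' ∂ν ∂ν)
      - 2 * ∫ x, ∫ y, k x y ∂ν ∂μ :=
  stmt_10_general P k hk_meas hk_bdd m n hm hn μ ν X Y hX hY hindep
end

section
/- Let (Ω, ℱ, P) be a probability space, S and T measurable spaces, ρ a probability measure on S, μ a probability measure on T, and φ : S × T → ℝ a bounded measurable function. Let N, K ≥ 1, let X_1, …, X_N be random variables with values in S each with law ρ, let W_1, …, W_K be random variables with values in T each with law μ, and assume the family (X_1, …, X_N, W_1, …, W_K) is mutually independent. Define m_θ(s) = ∫_T φ(s,t) dμ(t) and m_ω(t) = ∫_S φ(s,t) dρ(s). Then Var[ (1/(NK)) ∑_{i=1}^N ∑_{k=1}^K φ(X_i, W_k) ] = (1/(NK)) · Var_{ρ⊗μ}[φ] + (1/N − 1/(NK)) · Var_ρ[m_θ] + (1/K − 1/(NK)) · Var_μ[m_ω]. -/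
open MeasureTheory ProbabilityTheory

universe u

/-! Expanding the square, the second moment of `∑ i, ∑ k, φ (X i, W k)` is a sum of the `N²K²`
cross moments `E[φ (X i, W k) * φ (X j, W l)]`. By independence each of them depends only on
whether `i = j` and whether `k = l`: it is `∫ φ²`, `∫ mθ²`, `∫ mω²` or `(∫ φ)²`, with
multiplicities `NK`, `NK(K-1)`, `N(N-1)K` and `N(N-1)K(K-1)`. Since `∫ mθ = ∫ mω = ∫ φ` by
Fubini, subtracting the squared mean `(NK ∫ φ)²` regroups into the three variances. -/

lemma Fintype.sum_sum_ite_eq {ι R : Type*} [Fintype ι] [DecidableEq ι] [CommRing R] (u v : R) :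
    ∑ a : ι, ∑ b : ι, (if a = b then u else v) =
      Fintype.card ι * u + ((Fintype.card ι : R) ^ 2 - Fintype.card ι) * v := by
  have hsplit (a b : ι) : (if a = b then u else v) = (if a = b then u - v else 0) + v := by
    split_ifs <;> ring
  simp only [hsplit, Finset.sum_add_distrib, Finset.sum_ite_eq, Finset.mem_univ, if_true,
    Finset.sum_const, Finset.card_univ, nsmul_eq_mul]
  ring

section DoubleSums

variable {Ω ι κ : Type*} [MeasurableSpace Ω] {P : Measure Ω} [Fintype ι] [Fintype κ]

lemma integral_sum_sum_of_integral_eq {g : ι → κ → Ω → ℝ} (hg : ∀ i k, Integrable (g i k) P)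
    {m : ℝ} (hm : ∀ i k, ∫ ω, g i k ω ∂P = m) :
    ∫ ω, ∑ i, ∑ k, g i k ω ∂P = Fintype.card ι * Fintype.card κ * m := by
  rw [integral_finsetSum _ fun i _ => integrable_finsetSum _ fun k _ => hg i k]
  simp only [integral_finsetSum _ fun k _ => hg _ k, hm, Finset.sum_const, Finset.card_univ,
    nsmul_eq_mul]
  ring

lemma integral_sq_sum_sum_of_integral_mul_eq_ite [DecidableEq ι] [DecidableEq κ]
    {g : ι → κ → Ω → ℝ} (hg : ∀ i j k l, Integrable (fun ω => g i k ω * g j l ω) P)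
    {a b c d : ℝ} (hmom : ∀ i j k l, ∫ ω, g i k ω * g j l ω ∂P =
      if i = j then (if k = l then a else b) else if k = l then c else d) :
    ∫ ω, (∑ i, ∑ k, g i k ω) ^ 2 ∂P =
      Fintype.card ι * (Fintype.card κ * a + ((Fintype.card κ : ℝ) ^ 2 - Fintype.card κ) * b) +
        ((Fintype.card ι : ℝ) ^ 2 - Fintype.card ι) *
          (Fintype.card κ * c + ((Fintype.card κ : ℝ) ^ 2 - Fintype.card κ) * d) := by
  have hexpand (ω : Ω) :
      (∑ i, ∑ k, g i k ω) ^ 2 = ∑ i, ∑ j, ∑ k, ∑ l, g i k ω * g j l ω := by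
    simp_rw [sq, Finset.sum_mul_sum]
  have hintegral (i j : ι) :
      ∫ ω, ∑ k, ∑ l, g i k ω * g j l ω ∂P = ∑ k, ∑ l, ∫ ω, g i k ω * g j l ω ∂P := by
    rw [integral_finsetSum _ fun k _ => integrable_finsetSum _ fun l _ => hg i j k l]
    exact Finset.sum_congr rfl fun k _ => integral_finsetSum _ fun l _ => hg i j k l
  simp_rw [hexpand]
  rw [integral_finsetSum _ fun i _ => integrable_finsetSum _ fun j _ =>
    integrable_finsetSum _ fun k _ => integrable_finsetSum _ fun l _ => hg i j k l]
  simp only [integral_finsetSum _ fun j _ => integrable_finsetSum _ fun k _ =>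
    integrable_finsetSum _ fun l _ => hg _ j k l, hintegral, hmom, Finset.sum_ite_irrel,
    Fintype.sum_sum_ite_eq]

end DoubleSums

section IndependentPairs

variable {Ω S T : Type*} [MeasurableSpace Ω] [MeasurableSpace S] [MeasurableSpace T]
  {P : Measure Ω} [IsFiniteMeasure P] {ρ : Measure S} {μ : Measure T} {X : Ω → S} {W : Ω → T}

lemma ProbabilityTheory.IndepFun.map_prodMk_eq_prod (hXW : IndepFun X W P)
    (hX : AEMeasurable X P) (hW : AEMeasurable W P) (hXρ : P.map X = ρ) (hWμ : P.map W = μ) :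
    P.map (fun ω => (X ω, W ω)) = ρ.prod μ := by
  rw [(indepFun_iff_map_prod_eq_prod_map_map hX hW).mp hXW, hXρ, hWμ]

lemma ProbabilityTheory.IndepFun.integral_comp_prodMk (hXW : IndepFun X W P)
    (hX : AEMeasurable X P) (hW : AEMeasurable W P) (hXρ : P.map X = ρ) (hWμ : P.map W = μ)
    {f : S × T → ℝ} (hf : AEStronglyMeasurable f (ρ.prod μ)) :
    ∫ ω, f (X ω, W ω) ∂P = ∫ p, f p ∂(ρ.prod μ) := by
  rw [← hXW.map_prodMk_eq_prod hX hW hXρ hWμ] at hf ⊢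
  exact (integral_map (hX.prodMk hW) hf).symm

lemma integral_mul_comp_eq_integral_sq_integral [IsFiniteMeasure ρ] [IsFiniteMeasure μ]
    {W' : Ω → T} {φ : S × T → ℝ} (hφ : Measurable φ) {M : ℝ} (hM : ∀ p, |φ p| ≤ M)
    (hX : Measurable X) (hW : Measurable W) (hW' : Measurable W')
    (hXρ : P.map X = ρ) (hWμ : P.map W = μ) (hW'μ : P.map W' = μ)
    (hWW' : IndepFun W W' P) (hXWW' : IndepFun X (fun ω => (W ω, W' ω)) P) :
    ∫ ω, φ (X ω, W ω) * φ (X ω, W' ω) ∂P = ∫ s, (∫ t, φ (s, t) ∂μ) ^ 2 ∂ρ := by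
  set F : S × T × T → ℝ := fun q => φ (q.1, q.2.1) * φ (q.1, q.2.2)
  have hF : Measurable F := by fun_prop
  have hF_int : Integrable F (ρ.prod (μ.prod μ)) := by
    refine .of_bound hF.aestronglyMeasurable (M * M) (ae_of_all _ fun q => ?_)
    rw [Real.norm_eq_abs, abs_mul]
    exact mul_le_mul (hM _) (hM _) (abs_nonneg _) ((abs_nonneg _).trans (hM (q.1, q.2.1)))
  calc ∫ ω, φ (X ω, W ω) * φ (X ω, W' ω) ∂P
      = ∫ q, F q ∂(ρ.prod (μ.prod μ)) :=
        hXWW'.integral_comp_prodMk hX.aemeasurable (hW.prodMk hW').aemeasurable hXρ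
          (hWW'.map_prodMk_eq_prod hW.aemeasurable hW'.aemeasurable hWμ hW'μ)
          hF.aestronglyMeasurable
    _ = ∫ s, (∫ t, φ (s, t) ∂μ) ^ 2 ∂ρ := by
        rw [integral_prod F hF_int]
        refine integral_congr_ae (ae_of_all _ fun s => ?_)
        exact (integral_prod_mul (fun t => φ (s, t)) (fun t => φ (s, t))).trans (sq _).symm

lemma integral_mul_comp_eq_sq_integral {X' : Ω → S} {W' : Ω → T} {φ : S × T → ℝ}
    (hφ : Measurable φ) (hX : Measurable X) (hW : Measurable W) (hX' : Measurable X')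
    (hW' : Measurable W') (hXρ : P.map X = ρ) (hWμ : P.map W = μ) (hX'ρ : P.map X' = ρ)
    (hW'μ : P.map W' = μ) (hXW : IndepFun X W P) (hX'W' : IndepFun X' W' P)
    (hpairs : IndepFun (fun ω => (X ω, W ω)) (fun ω => (X' ω, W' ω)) P) :
    ∫ ω, φ (X ω, W ω) * φ (X' ω, W' ω) ∂P = (∫ p, φ p ∂(ρ.prod μ)) ^ 2 := by
  have h := hpairs.integral_comp_mul_comp (hX.prodMk hW).aemeasurable
    (hX'.prodMk hW').aemeasurable hφ.aestronglyMeasurable hφ.aestronglyMeasurable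
  simp only [Function.comp_def, Pi.mul_apply] at h
  rw [h, hXW.integral_comp_prodMk hX.aemeasurable hW.aemeasurable hXρ hWμ
    hφ.aestronglyMeasurable, hX'W'.integral_comp_prodMk hX'.aemeasurable hW'.aemeasurable hX'ρ
    hW'μ hφ.aestronglyMeasurable, sq]

end IndependentPairs

lemma integral_mul_comp_eq_ite {Ω : Type*} {S T : Type u} {ι κ : Type*} [MeasurableSpace Ω]
    [MeasurableSpace S] [MeasurableSpace T] [DecidableEq ι] [DecidableEq κ]
    {P : Measure Ω} [IsFiniteMeasure P] {ρ : Measure S} [IsFiniteMeasure ρ]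
    {μ : Measure T} [IsFiniteMeasure μ] {φ : S × T → ℝ} (hφ : Measurable φ) {M : ℝ}
    (hM : ∀ p, |φ p| ≤ M) {X : ι → Ω → S} {W : κ → Ω → T}
    (hX : ∀ i, Measurable (X i) ∧ Measure.map (X i) P = ρ)
    (hW : ∀ k, Measurable (W k) ∧ Measure.map (W k) P = μ)
    (hindep : iIndepFun
      (m := fun i : ι ⊕ κ =>
        Sum.rec (motive := fun i => MeasurableSpace (Sum.elim (fun _ => S) (fun _ => T) i))
          (fun _ => (inferInstance : MeasurableSpace S))
          (fun _ => (inferInstance : MeasurableSpace T)) i)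
      (fun i => Sum.rec (motive := fun i => Ω → Sum.elim (fun _ => S) (fun _ => T) i)
        X W i) P)
    (i j : ι) (k l : κ) :
    ∫ ω, φ (X i ω, W k ω) * φ (X j ω, W l ω) ∂P =
      if i = j then
        (if k = l then ∫ p, φ p ^ 2 ∂(ρ.prod μ) else ∫ s, (∫ t, φ (s, t) ∂μ) ^ 2 ∂ρ)
      else if k = l then ∫ t, (∫ s, φ (s, t) ∂ρ) ^ 2 ∂μ else (∫ p, φ p ∂(ρ.prod μ)) ^ 2 := by
  have hXW (i : ι) (k : κ) : IndepFun (X i) (W k) P :=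
    hindep.indepFun (i := .inl i) (j := .inr k) Sum.inl_ne_inr
  split_ifs with hij hkl hkl
  · subst hij hkl
    simp only [← sq]
    exact (hXW i k).integral_comp_prodMk (hX i).1.aemeasurable (hW k).1.aemeasurable
      (hX i).2 (hW k).2 (hφ.pow_const 2).aestronglyMeasurable
  · subst hij
    exact integral_mul_comp_eq_integral_sq_integral hφ hM (hX i).1 (hW k).1 (hW l).1 (hX i).2
      (hW k).2 (hW l).2 (hindep.indepFun (i := .inr k) (j := .inr l) (by simpa))
      (hindep.indepFun_prodMk (by rintro (i | k); exacts [(hX i).1, (hW k).1])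
        (.inr k) (.inr l) (.inl i) Sum.inr_ne_inl Sum.inr_ne_inl).symm
  · subst hkl
    -- a shared `W k` is a shared first argument of `φ ∘ Prod.swap`
    exact integral_mul_comp_eq_integral_sq_integral (φ := φ ∘ Prod.swap)
      (hφ.comp measurable_swap) (fun _ => hM _) (hW k).1 (hX i).1 (hX j).1 (hW k).2
      (hX i).2 (hX j).2 (hindep.indepFun (i := .inl i) (j := .inl j) (by simpa))
      (hindep.indepFun_prodMk (by rintro (i | k); exacts [(hX i).1, (hW k).1])
        (.inl i) (.inl j) (.inr k) Sum.inl_ne_inr Sum.inl_ne_inr).symm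
  · exact integral_mul_comp_eq_sq_integral hφ (hX i).1 (hW k).1 (hX j).1 (hW l).1 (hX i).2
      (hW k).2 (hX j).2 (hW l).2 (hXW i k) (hXW j l)
      (hindep.indepFun_prodMk_prodMk (by rintro (i | k); exacts [(hX i).1, (hW k).1])
        (.inl i) (.inr k) (.inl j) (.inr l) (by simpa) Sum.inl_ne_inr Sum.inr_ne_inl
        (by simpa))

/-- Variance of the Monte Carlo estimator
`Î₂ = (1/(NK)) ∑_i ∑_k φ(X_i, W_k)` in which all samples `X_i ∼ ρ` share the same
samples `W_k ∼ μ`, the whole family being mutually independent. -/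
theorem stmt_12 {Ω : Type*} {S T : Type u}
    [MeasurableSpace Ω] [MeasurableSpace S] [MeasurableSpace T]
    (P : Measure Ω) [IsProbabilityMeasure P]
    (ρ : Measure S) [IsProbabilityMeasure ρ]
    (μ : Measure T) [IsProbabilityMeasure μ]
    (φ : S × T → ℝ) (hφ_meas : Measurable φ) (hφ_bdd : ∃ M : ℝ, ∀ p, |φ p| ≤ M)
    (N K : ℕ) (hN : 1 ≤ N) (hK : 1 ≤ K)
    (X : Fin N → Ω → S) (W : Fin K → Ω → T)
    (hX : ∀ i, Measurable (X i) ∧ Measure.map (X i) P = ρ)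
    (hW : ∀ k, Measurable (W k) ∧ Measure.map (W k) P = μ)
    (hindep : iIndepFun
      (m := fun i : Fin N ⊕ Fin K =>
        Sum.rec (motive := fun i => MeasurableSpace (Sum.elim (fun _ => S) (fun _ => T) i))
          (fun _ => (inferInstance : MeasurableSpace S))
          (fun _ => (inferInstance : MeasurableSpace T)) i)
      (fun i => Sum.rec (motive := fun i => Ω → Sum.elim (fun _ => S) (fun _ => T) i)
        X W i) P)
    (mθ : S → ℝ) (hmθ : ∀ s, mθ s = ∫ t, φ (s, t) ∂μ)
    (mω : T → ℝ) (hmω : ∀ t, mω t = ∫ s, φ (s, t) ∂ρ) :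
    (∫ ω, ((1 / ((N : ℝ) * (K : ℝ))) * ∑ i : Fin N, ∑ k : Fin K, φ (X i ω, W k ω)) ^ 2 ∂P)
      - (∫ ω, (1 / ((N : ℝ) * (K : ℝ))) * ∑ i : Fin N, ∑ k : Fin K, φ (X i ω, W k ω) ∂P) ^ 2
    = (1 / ((N : ℝ) * (K : ℝ))) *
        ((∫ p, (φ p) ^ 2 ∂(ρ.prod μ)) - (∫ p, φ p ∂(ρ.prod μ)) ^ 2)
      + (1 / (N : ℝ) - 1 / ((N : ℝ) * (K : ℝ))) *
        ((∫ s, (mθ s) ^ 2 ∂ρ) - (∫ s, mθ s ∂ρ) ^ 2)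
      + (1 / (K : ℝ) - 1 / ((N : ℝ) * (K : ℝ))) *
        ((∫ t, (mω t) ^ 2 ∂μ) - (∫ t, mω t ∂μ) ^ 2) := by
  obtain ⟨M, hM⟩ := hφ_bdd
  obtain rfl : mθ = fun s => ∫ t, φ (s, t) ∂μ := funext hmθ
  obtain rfl : mω = fun t => ∫ s, φ (s, t) ∂ρ := funext hmω
  have hφ_int : Integrable φ (ρ.prod μ) :=
    .of_bound hφ_meas.aestronglyMeasurable M (ae_of_all _ hM)
  have hg (i : Fin N) (k : Fin K) : Integrable (fun ω => φ (X i ω, W k ω)) P :=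
    .of_bound (hφ_meas.comp ((hX i).1.prodMk (hW k).1)).aestronglyMeasurable M
      (ae_of_all _ fun _ => hM _)
  have hgg (i j : Fin N) (k l : Fin K) :
      Integrable (fun ω => φ (X i ω, W k ω) * φ (X j ω, W l ω)) P :=
    (hg j l).bdd_mul (hg i k).aestronglyMeasurable (ae_of_all _ fun _ => hM _)
  have hXW (i : Fin N) (k : Fin K) : IndepFun (X i) (W k) P :=
    hindep.indepFun (i := .inl i) (j := .inr k) Sum.inl_ne_inr
  have hmean (i : Fin N) (k : Fin K) : ∫ ω, φ (X i ω, W k ω) ∂P = ∫ p, φ p ∂(ρ.prod μ) :=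
    (hXW i k).integral_comp_prodMk (hX i).1.aemeasurable (hW k).1.aemeasurable (hX i).2
      (hW k).2 hφ_meas.aestronglyMeasurable
  have hN0 : (N : ℝ) ≠ 0 := Nat.cast_ne_zero.mpr (Nat.one_le_iff_ne_zero.mp hN)
  have hK0 : (K : ℝ) ≠ 0 := Nat.cast_ne_zero.mpr (Nat.one_le_iff_ne_zero.mp hK)
  simp_rw [mul_pow, integral_const_mul, integral_sum_sum_of_integral_eq hg hmean,
    integral_sq_sum_sum_of_integral_mul_eq_ite hgg
      (integral_mul_comp_eq_ite hφ_meas hM hX hW hindep), ← integral_prod φ hφ_int,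
    ← integral_prod_symm φ hφ_int, Fintype.card_fin]
  field_simp
  ring
end

section
/- Let (Ω, ℱ, P) be a probability space, S and T measurable spaces, ρ a probability measure on S, μ a probability measure on T, and φ : S × T → ℝ a bounded measurable function. Let N, K ≥ 1, let X_1, …, X_N be random variables with values in S each with law ρ, let (W_{ik})_{1≤i≤N, 1≤k≤K} be random variables with values in T each with law μ, and assume the whole family (X_1, …, X_N) together with all W_{ik} is mutually independent. Define m_θ(s) = ∫_T φ(s,t) dμ(t) and v(s) = ∫_T φ(s,t)² dμ(t) − m_θ(s)². Then Var[ (1/(NK)) ∑_{i=1}^N ∑_{k=1}^K φ(X_i, W_{ik}) ] = (1/(NK)) · ∫_S v(s) dρ(s) + (1/N) · Var_ρ[m_θ]. -/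
/-!
Write `Y i k = φ (X i, W (i, k))`. The variance of `∑ i, ∑ k, Y i k` is the sum of the
covariances `cov[Y i k, Y j l]`. They vanish for `i ≠ j`, since the pairs `(X i, W (i, k))` and
`(X j, W (j, l))` are independent. For `i = j` and `k ≠ l`, the two factors are independent
given `X i = s`, each with mean `mθ s`, so `E[Y i k * Y i l] = ∫ mθ² dρ` and the covariance is
`Var_ρ[mθ]`. On the diagonal, `E[Y i k ^ 2] = ∫ v dρ + ∫ mθ² dρ`, so the variance is
`∫ v dρ + Var_ρ[mθ]`. Summing `NK` diagonal and `NK(K - 1)` off-diagonal terms within a row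
and dividing by `(NK)²` gives the formula.
-/

open MeasureTheory ProbabilityTheory

universe u

section Covariance

variable {Ω ι κ : Type*} [MeasurableSpace Ω] {P : Measure Ω} [Fintype ι] [Fintype κ]

theorem variance_fun_sum_fun_sum_of_covariance [IsFiniteMeasure P] {Y : ι → κ → Ω → ℝ}
    (hY : ∀ i k, MemLp (Y i k) 2 P) {σ τ : ℝ} (hdiag : ∀ i k, Var[Y i k; P] = σ + τ)
    (hrow : ∀ i k l, k ≠ l → cov[Y i k, Y i l; P] = τ)
    (hcross : ∀ i j k l, i ≠ j → cov[Y i k, Y j l; P] = 0) :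
    Var[fun ω ↦ ∑ i, ∑ k, Y i k ω; P]
      = Fintype.card ι * (Fintype.card κ * σ + Fintype.card κ ^ 2 * τ) := by
  classical
  have hcov : ∀ i j k l,
      cov[Y i k, Y j l; P] = if i = j then (if k = l then σ else 0) + τ else 0 := by
    intro i j k l
    rcases eq_or_ne i j with rfl | hij
    · rcases eq_or_ne k l with rfl | hkl
      · simp [covariance_self (hY i k).aemeasurable, hdiag]
      · simp [hrow i k l hkl, hkl]
    · simp [hcross i j k l hij, hij]
  rw [variance_fun_sum fun i ↦ memLp_finsetSum _ fun k _ ↦ hY i k]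
  simp only [covariance_fun_sum_fun_sum (hY _) (hY _), hcov]
  simp only [Finset.sum_ite_irrel, Finset.sum_add_distrib, Finset.sum_ite_eq, Finset.mem_univ,
    ↓reduceIte, Finset.sum_const, Finset.card_univ, nsmul_eq_mul, mul_zero]
  ring

end Covariance

section Integral

variable {Ω S T : Type*} [MeasurableSpace Ω] [MeasurableSpace S] [MeasurableSpace T]
  {P : Measure Ω} [IsFiniteMeasure P] {ρ : Measure S} {ν : Measure T} {X : Ω → S} {Y : Ω → T}

theorem ProbabilityTheory.IndepFun.integral_comp_prodMk_s13 (hXY : IndepFun X Y P)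
    (hX : AEMeasurable X P) (hY : AEMeasurable Y P) (hρ : P.map X = ρ) (hν : P.map Y = ν)
    {g : S × T → ℝ} (hg : Integrable g (ρ.prod ν)) :
    ∫ ω, g (X ω, Y ω) ∂P = ∫ s, ∫ t, g (s, t) ∂ν ∂ρ := by
  have hlaw := hXY.map_prod_eq_prod_map_map hX hY
  subst hρ hν
  rw [← integral_prod g hg, ← hlaw,
    integral_map (hX.prodMk hY) (hlaw ▸ hg.aestronglyMeasurable)]

end Integral

section Bounded

variable {α β : Type*} [MeasurableSpace α] [MeasurableSpace β] {ν : Measure β}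
  [IsFiniteMeasure ν] {φ : α → ℝ} {M : ℝ}

theorem memLp_comp_of_abs_le (hφ : Measurable φ) (hM : ∀ a, |φ a| ≤ M) {f : β → α}
    (hf : Measurable f) (p : ENNReal) : MemLp (fun b ↦ φ (f b)) p ν :=
  .of_bound (hφ.comp hf).aestronglyMeasurable M (ae_of_all _ fun b ↦ hM (f b))

theorem integrable_comp_mul_comp_of_abs_le (hφ : Measurable φ) (hM : ∀ a, |φ a| ≤ M)
    {f g : β → α} (hf : Measurable f) (hg : Measurable g) :
    Integrable (fun b ↦ φ (f b) * φ (g b)) ν :=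
  (memLp_comp_of_abs_le hφ hM hf 2).integrable_mul (memLp_comp_of_abs_le hφ hM hg 2)

end Bounded

section NestedSampling

variable {Ω S T ι κ : Type*} [MeasurableSpace Ω] [MeasurableSpace S] [MeasurableSpace T]
  {P : Measure Ω} [IsProbabilityMeasure P] {ρ : Measure S} [IsProbabilityMeasure ρ]
  {μ : Measure T} [IsProbabilityMeasure μ] {φ : S × T → ℝ} {M : ℝ}

theorem integral_comp_mul_comp_of_indepFun (hφ : Measurable φ) (hM : ∀ p, |φ p| ≤ M)
    {X : Ω → S} {W W' : Ω → T} (hX : Measurable X) (hW : Measurable W) (hW' : Measurable W')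
    (hXρ : P.map X = ρ) (hWμ : P.map W = μ) (hW'μ : P.map W' = μ) (hWW' : IndepFun W W' P)
    (hXWW' : IndepFun X (fun ω ↦ (W ω, W' ω)) P) :
    ∫ ω, φ (X ω, W ω) * φ (X ω, W' ω) ∂P = ∫ s, (∫ t, φ (s, t) ∂μ) ^ 2 ∂ρ := by
  have hlaw : P.map (fun ω ↦ (W ω, W' ω)) = μ.prod μ := by
    rw [hWW'.map_prod_eq_prod_map_map hW.aemeasurable hW'.aemeasurable, hWμ, hW'μ]
  rw [hXWW'.integral_comp_prodMk_s13 (g := fun z ↦ φ (z.1, z.2.1) * φ (z.1, z.2.2))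
    hX.aemeasurable (hW.prodMk hW').aemeasurable hXρ hlaw
    (integrable_comp_mul_comp_of_abs_le hφ hM (by fun_prop) (by fun_prop))]
  congr 1 with s
  rw [integral_prod_mul (fun t ↦ φ (s, t)) (fun t ↦ φ (s, t)), sq]

theorem memLp_integral_right_of_abs_le (hφ : Measurable φ) (hM : ∀ p, |φ p| ≤ M)
    (p : ENNReal) : MemLp (fun s ↦ ∫ t, φ (s, t) ∂μ) p ρ := by
  refine .of_bound hφ.stronglyMeasurable.integral_prod_right'.aestronglyMeasurable M
    (ae_of_all _ fun s ↦ ?_)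
  simpa using norm_integral_le_of_norm_le_const (μ := μ) (f := fun t ↦ φ (s, t))
    (ae_of_all _ fun t ↦ hM (s, t))

theorem variance_sum_sum_comp_of_indepFun [Fintype ι] [Fintype κ] (hφ : Measurable φ)
    (hM : ∀ p, |φ p| ≤ M) {X : ι → Ω → S} {W : ι × κ → Ω → T} (hX : ∀ i, Measurable (X i))
    (hXρ : ∀ i, P.map (X i) = ρ) (hW : ∀ p, Measurable (W p)) (hWμ : ∀ p, P.map (W p) = μ)
    (hXW : ∀ i k, IndepFun (X i) (W (i, k)) P)
    (hWW : ∀ i k l, k ≠ l → IndepFun (W (i, k)) (W (i, l)) P)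
    (hXWW : ∀ i k l, k ≠ l → IndepFun (X i) (fun ω ↦ (W (i, k) ω, W (i, l) ω)) P)
    (hrows : ∀ i j k l, i ≠ j →
      IndepFun (fun ω ↦ (X i ω, W (i, k) ω)) (fun ω ↦ (X j ω, W (j, l) ω)) P) :
    Var[fun ω ↦ ∑ i, ∑ k, φ (X i ω, W (i, k) ω); P]
      = Fintype.card ι *
          (Fintype.card κ * ∫ s, (∫ t, φ (s, t) ^ 2 ∂μ - (∫ t, φ (s, t) ∂μ) ^ 2) ∂ρ
            + Fintype.card κ ^ 2 *
              (∫ s, (∫ t, φ (s, t) ∂μ) ^ 2 ∂ρ - (∫ s, ∫ t, φ (s, t) ∂μ ∂ρ) ^ 2)) := by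
  have hY : ∀ i k, MemLp (fun ω ↦ φ (X i ω, W (i, k) ω)) 2 P := fun i k ↦
    memLp_comp_of_abs_le hφ hM ((hX i).prodMk (hW _)) 2
  have hφ_int : Integrable φ (ρ.prod μ) :=
    (memLp_comp_of_abs_le hφ hM measurable_id 1).integrable le_rfl
  have hφsq_int : Integrable (fun z ↦ φ z ^ 2) (ρ.prod μ) :=
    (memLp_comp_of_abs_le hφ hM measurable_id 2).integrable_sq
  have hmean : ∀ i k, P[fun ω ↦ φ (X i ω, W (i, k) ω)] = ∫ s, ∫ t, φ (s, t) ∂μ ∂ρ :=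
    fun i k ↦ (hXW i k).integral_comp_prodMk_s13 (hX i).aemeasurable (hW _).aemeasurable (hXρ i)
      (hWμ _) hφ_int
  refine variance_fun_sum_fun_sum_of_covariance hY (fun i k ↦ ?_) (fun i k l hkl ↦ ?_)
    (fun i j k l hij ↦ ((hrows i j k l hij).comp hφ hφ).covariance_eq_zero (hY i k) (hY j l))
  · have hsq : P[(fun ω ↦ φ (X i ω, W (i, k) ω)) ^ 2] = ∫ s, ∫ t, φ (s, t) ^ 2 ∂μ ∂ρ :=
      (hXW i k).integral_comp_prodMk_s13 (hX i).aemeasurable (hW _).aemeasurable (hXρ i) (hWμ _)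
        hφsq_int
    rw [variance_eq_sub (hY i k), hsq, hmean, integral_sub hφsq_int.integral_prod_left
      (memLp_integral_right_of_abs_le hφ hM 2).integrable_sq]
    ring
  · rw [covariance_eq_sub (hY i k) (hY i l), hmean, hmean, Pi.mul_def,
      integral_comp_mul_comp_of_indepFun hφ hM (hX i) (hW _) (hW _) (hXρ i) (hWμ _) (hWμ _)
        (hWW i k l hkl) (hXWW i k l hkl)]
    ring

end NestedSampling

/-- Variance of the Monte Carlo estimator
`Î₃ = (1/(NK)) ∑_i ∑_k φ(X_i, W_{ik})` in which each sample `X_i ∼ ρ` has its own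
independent samples `W_{ik} ∼ μ`, the whole family being mutually independent. -/
theorem stmt_13 {Ω : Type*} {S T : Type u}
    [MeasurableSpace Ω] [MeasurableSpace S] [MeasurableSpace T]
    (P : Measure Ω) [IsProbabilityMeasure P]
    (ρ : Measure S) [IsProbabilityMeasure ρ]
    (μ : Measure T) [IsProbabilityMeasure μ]
    (φ : S × T → ℝ) (hφ_meas : Measurable φ) (hφ_bdd : ∃ M : ℝ, ∀ p, |φ p| ≤ M)
    (N K : ℕ) (hN : 1 ≤ N) (hK : 1 ≤ K)
    (X : Fin N → Ω → S) (W : Fin N × Fin K → Ω → T)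
    (hX : ∀ i, Measurable (X i) ∧ Measure.map (X i) P = ρ)
    (hW : ∀ ik, Measurable (W ik) ∧ Measure.map (W ik) P = μ)
    (hindep : iIndepFun (m :=
      fun i : Fin N ⊕ (Fin N × Fin K) =>
        Sum.rec (motive := fun i => MeasurableSpace (Sum.elim (fun _ => S) (fun _ => T) i))
          (fun _ => (inferInstance : MeasurableSpace S))
          (fun _ => (inferInstance : MeasurableSpace T)) i)
      (fun i => Sum.rec (motive := fun i => Ω → Sum.elim (fun _ => S) (fun _ => T) i)
        X W i) P)
    (mθ : S → ℝ) (hmθ : ∀ s, mθ s = ∫ t, φ (s, t) ∂μ)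
    (v : S → ℝ) (hv : ∀ s, v s = (∫ t, (φ (s, t)) ^ 2 ∂μ) - (mθ s) ^ 2) :
    (∫ ω, ((1 / ((N : ℝ) * (K : ℝ))) * ∑ i : Fin N, ∑ k : Fin K, φ (X i ω, W (i, k) ω)) ^ 2 ∂P)
      - (∫ ω, (1 / ((N : ℝ) * (K : ℝ))) * ∑ i : Fin N, ∑ k : Fin K, φ (X i ω, W (i, k) ω) ∂P) ^ 2
    = (1 / ((N : ℝ) * (K : ℝ))) * (∫ s, v s ∂ρ)
      + (1 / (N : ℝ)) * ((∫ s, (mθ s) ^ 2 ∂ρ) - (∫ s, mθ s ∂ρ) ^ 2) := by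
  obtain ⟨M, hM⟩ := hφ_bdd
  obtain rfl : mθ = fun s ↦ ∫ t, φ (s, t) ∂μ := funext hmθ
  obtain rfl : v = fun s ↦ ∫ t, φ (s, t) ^ 2 ∂μ - (∫ t, φ (s, t) ∂μ) ^ 2 := funext hv
  have hvar := variance_sum_sum_comp_of_indepFun hφ_meas hM (fun i ↦ (hX i).1)
    (fun i ↦ (hX i).2) (fun p ↦ (hW p).1) (fun p ↦ (hW p).2)
    (fun i k ↦ hindep.indepFun (i := .inl i) (j := .inr (i, k)) (by simp))
    (fun i k l hkl ↦ hindep.indepFun (i := .inr (i, k)) (j := .inr (i, l)) (by simp [hkl]))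
    (fun i k l _ ↦ (hindep.indepFun_prodMk (by rintro (i | p); exacts [(hX i).1, (hW p).1])
      (.inr (i, k)) (.inr (i, l)) (.inl i) (by simp) (by simp)).symm)
    (fun i j k l hij ↦ hindep.indepFun_prodMk_prodMk
      (by rintro (i | p); exacts [(hX i).1, (hW p).1])
      (.inl i) (.inr (i, k)) (.inl j) (.inr (j, l)) (by simp [hij]) (by simp) (by simp)
      (by simp [hij]))
  have hsum : MemLp (fun ω ↦ ∑ i, ∑ k, φ (X i ω, W (i, k) ω)) 2 P :=
    memLp_finsetSum _ fun i _ ↦ memLp_finsetSum _ fun k _ ↦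
      memLp_comp_of_abs_le hφ_meas hM ((hX i).1.prodMk (hW _).1) 2
  have hN0 : (N : ℝ) ≠ 0 := by positivity
  have hK0 : (K : ℝ) ≠ 0 := by positivity
  have key := variance_eq_sub (hsum.const_mul (1 / ((N : ℝ) * K)))
  rw [variance_const_mul, hvar, Fintype.card_fin, Fintype.card_fin] at key
  simp only [Pi.pow_apply] at key
  beta_reduce
  rw [← key]
  field_simp
end
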